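/- arXiv:2503.15608 — 8 statements merged into one kernel-verified Lean document; each statement's English description precedes it below -/
import Mathlib

section
/- Let r < n/2 and let 𝒜 be a pairwise intersecting family of r-element subsets of {1,...,n} with |𝒜| = C(n-1, r-1). Then there exists an element x such that 𝒜 consists exactly of all r-element subsets of {1,...,n} containing x. -/
/-!
Katona's circle method. Place the ground set around a cycle by a bijection `σ : ZMod n ≃ α`.
The arcs of `r` consecutive positions that `σ` maps into an intersecting family pairwise meet,
so for `2 * r < n` there are at most `r` of them; averaging over all `σ` shows that a family of
size `C(n - 1, r - 1)` has exactly `r` on every cycle. In that equality case, if the arc starting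
at `i` is in the family and the one starting at `i + 1` is not, then all `r` arcs through
position `i` are.

An intersecting family is not closed under exchanging one element of a member (two members
could then be moved apart until disjoint), so some `B ∈ 𝒜`, `b ∈ B`, `c ∉ B` have
`B - b + c ∉ 𝒜`. A cycle on which the arc `B` starts with `b` and is followed by `c`, and on
which a given `r`-set `C ∋ b` with `c ∉ C` is another arc through `b`, puts `C` in `𝒜`. Every
member of `𝒜` meets all such `C`, hence contains `b`, and counting shows that `𝒜` is the whole
star of `b`.
-/

open Finset
open scoped Nat

namespace EKR

variable {n r : ℕ}

def arc (r : ℕ) (i : ZMod n) : Finset (ZMod n) := (range r).image fun j : ℕ => i + j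

theorem mem_arc {i p : ZMod n} : p ∈ arc r i ↔ ∃ j < r, i + j = p := by
  simp [arc]

theorem add_mem_arc {j : ℕ} (hj : j < r) (i : ZMod n) : i + j ∈ arc r i :=
  mem_arc.2 ⟨j, hj, rfl⟩

theorem natCast_injOn : Set.InjOn (Nat.cast : ℕ → ZMod n) (Set.Iio n) := fun j hj j' hj' h => by
  rw [← ZMod.val_natCast_of_lt hj, h, ZMod.val_natCast_of_lt hj']

theorem card_arc (hrn : r ≤ n) (i : ZMod n) : #(arc r i) = r := by
  rw [arc, card_image_of_injOn, card_range]
  intro j hj j' hj' h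
  rw [coe_range, Set.mem_Iio] at hj hj'
  exact natCast_injOn (Set.mem_Iio.2 (by omega)) (Set.mem_Iio.2 (by omega)) (add_left_cancel h)

theorem disjoint_arc_add {d : ℕ} (hrd : r ≤ d) (hdn : d + r ≤ n) (i : ZMod n) :
    Disjoint (arc r i) (arc r (i + d)) := by
  simp only [Finset.disjoint_left, mem_arc]
  rintro _ ⟨j, hj, rfl⟩ ⟨j', hj', h⟩
  have : ((d + j' : ℕ) : ZMod n) = j := by
    push_cast
    linear_combination h
  have := natCast_injOn (Set.mem_Iio.2 (by omega)) (Set.mem_Iio.2 (by omega)) this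
  omega

theorem exists_eq_add_or_eq_sub_of_not_disjoint {i i' : ZMod n}
    (h : ¬ Disjoint (arc r i) (arc r i')) : ∃ d < r, i' = i + d ∨ i' = i - d := by
  obtain ⟨p, hp, hp'⟩ := Finset.not_disjoint_iff.1 h
  obtain ⟨j, hj, rfl⟩ := mem_arc.1 hp
  obtain ⟨j', hj', hjj'⟩ := mem_arc.1 hp'
  rcases le_total j' j with hle | hle
  · exact ⟨j - j', by omega, Or.inl (by rw [Nat.cast_sub hle]; linear_combination hjj')⟩
  · exact ⟨j' - j, by omega, Or.inr (by rw [Nat.cast_sub hle]; linear_combination hjj')⟩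

def ArcIntersecting (r : ℕ) (G : Finset (ZMod n)) : Prop :=
  ∀ i ∈ G, ∀ i' ∈ G, ¬ Disjoint (arc r i) (arc r i')

/-- An arc meeting `arc r i₀` starts in `i₀ + [0, r)` or in `i₀ - [1, r)`; shifting the latter
by `r` lands in `arc r i₀`, injectively because arcs starting `r` apart are disjoint. -/
def foldIntoArc (r : ℕ) (i₀ i : ZMod n) : ZMod n := if i ∈ arc r i₀ then i else i + r

namespace ArcIntersecting

variable {G : Finset (ZMod n)} {i₀ : ZMod n} (hG : ArcIntersecting r G)
include hG

theorem foldIntoArc_mem (hi₀ : i₀ ∈ G) {i : ZMod n} (hi : i ∈ G) :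
    foldIntoArc r i₀ i ∈ arc r i₀ := by
  unfold foldIntoArc
  split_ifs with h
  · exact h
  obtain ⟨d, hd, rfl | rfl⟩ := exists_eq_add_or_eq_sub_of_not_disjoint (hG _ hi₀ _ hi)
  · exact absurd (add_mem_arc hd _) h
  · have hd₀ : d ≠ 0 := by
      rintro rfl
      exact h (by simpa using add_mem_arc hd i₀)
    exact mem_arc.2 ⟨r - d, by omega, by rw [Nat.cast_sub hd.le]; ring⟩

theorem foldIntoArc_injOn (hrn : 2 * r ≤ n) : Set.InjOn (foldIntoArc r i₀) G := by
  have hne : ∀ i ∈ G, ∀ i' ∈ G, i ≠ i' + r := fun i hi i' hi' h =>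
    hG _ hi' _ hi (h ▸ disjoint_arc_add le_rfl (by omega) i')
  intro i hi i' hi' h
  unfold foldIntoArc at h
  split_ifs at h
  · exact h
  · exact absurd h (hne i hi i' hi')
  · exact absurd h.symm (hne i' hi' i hi)
  · exact add_right_cancel h

theorem card_le (hrn : 2 * r ≤ n) : #G ≤ r := by
  obtain rfl | ⟨i₀, hi₀⟩ := G.eq_empty_or_nonempty
  · simp
  calc #G ≤ #(arc r i₀) :=
        card_le_card_of_injOn _ (fun i hi => hG.foldIntoArc_mem hi₀ hi) (hG.foldIntoArc_injOn hrn)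
    _ = r := card_arc (by omega) i₀

theorem add_mem_or_add_sub_mem (hrn : 2 * r ≤ n) (hGr : #G = r) (hi₀ : i₀ ∈ G) {j : ℕ}
    (hj : j < r) : i₀ + j ∈ G ∨ i₀ + j - r ∈ G := by
  obtain ⟨i, hi, hfold⟩ := surjOn_of_injOn_of_card_le _ (fun i hi => hG.foldIntoArc_mem hi₀ hi)
    (hG.foldIntoArc_injOn hrn) (by rw [card_arc (by omega), hGr]) (add_mem_arc hj i₀)
  dsimp only [foldIntoArc] at hfold
  split_ifs at hfold
  · exact Or.inl (hfold ▸ hi)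
  · exact Or.inr (by rwa [← hfold, add_sub_cancel_right])

theorem sub_mem_of_add_one_not_mem (hrn : 2 * r < n) (hGr : #G = r) (hi₀ : i₀ ∈ G)
    (hi₁ : i₀ + 1 ∉ G) {k : ℕ} (hk : k < r) : i₀ - k ∈ G := by
  have add_not_mem : ∀ j, 1 ≤ j → j < r → i₀ + j ∉ G := by
    intro j hj
    induction j, hj using Nat.le_induction with
    | base => exact fun _ => by simpa using hi₁
    | succ j hj ih =>
      intro hjr hmem
      have hsub := (hG.add_mem_or_add_sub_mem hrn.le hGr hi₀ (by omega : j < r)).resolve_left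
        (ih (by omega))
      have hdisj := disjoint_arc_add (r := r) (d := r + 1) (by omega) (by omega)
        (i₀ + j - r : ZMod n)
      rw [show (i₀ + j - r : ZMod n) + (r + 1 : ℕ) = i₀ + (j + 1 : ℕ) by push_cast; ring]
        at hdisj
      exact hG _ hsub _ hmem hdisj
  obtain rfl | hk₀ := Nat.eq_zero_or_pos k
  · simpa using hi₀
  have h := (hG.add_mem_or_add_sub_mem hrn.le hGr hi₀ (by omega : r - k < r)).resolve_left
    (add_not_mem _ (by omega) (by omega))
  rwa [Nat.cast_sub hk.le, show i₀ + (r - k : ZMod n) - r = i₀ - k by ring] at h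

end ArcIntersecting

section CountEquivs

theorem map_equiv_eq_iff {α β : Type*} {s : Finset β} {t : Finset α} {σ : β ≃ α} :
    s.map σ.toEmbedding = t ↔ ∀ x, x ∈ s ↔ σ x ∈ t := by
  rw [Finset.ext_iff, σ.forall_congr_left]
  simp [Finset.mem_map_equiv]

variable {α β : Type*} [Fintype α] [DecidableEq α] [Fintype β] [DecidableEq β]

def mapEqEquivProd (s : Finset β) (t : Finset α) :
    {σ : β ≃ α // ∀ x, x ∈ s ↔ σ x ∈ t} ≃
      ({x // x ∈ s} ≃ {y // y ∈ t}) × ({x // x ∉ s} ≃ {y // y ∉ t}) where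
  toFun σ := (σ.1.subtypeEquiv σ.2, σ.1.subtypeEquiv fun x => not_congr (σ.2 x))
  invFun ef :=
    ⟨(Equiv.sumCompl (· ∈ s)).symm.trans ((ef.1.sumCongr ef.2).trans (Equiv.sumCompl (· ∈ t))),
      fun x => by
        by_cases hx : x ∈ s
        · simp [Equiv.sumCompl_symm_apply_of_pos hx, hx, (ef.1 ⟨x, hx⟩).2]
        · simp [Equiv.sumCompl_symm_apply_of_neg hx, hx, (ef.2 ⟨x, hx⟩).2]⟩
  left_inv σ := by
    ext x
    by_cases hx : x ∈ s
    · simp [Equiv.sumCompl_symm_apply_of_pos hx]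
    · simp [Equiv.sumCompl_symm_apply_of_neg hx]
  right_inv ef := by
    ext ⟨x, hx⟩ <;> simp [Equiv.sumCompl_symm_apply_of_pos, Equiv.sumCompl_symm_apply_of_neg, hx]

theorem card_map_equiv_eq (s : Finset β) (t : Finset α) (hst : #s = #t)
    (hβα : Fintype.card β = Fintype.card α) :
    #{σ : β ≃ α | s.map σ.toEmbedding = t} = (#s)! * (Fintype.card β - #s)! := by
  have hs : Fintype.card {x // x ∈ s} = Fintype.card {y // y ∈ t} := by simpa using hst
  have hsc : Fintype.card {x // x ∉ s} = Fintype.card {y // y ∉ t} := by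
    simp [Fintype.card_subtype_compl, hst, hβα]
  simp_rw [map_equiv_eq_iff]
  rw [← Fintype.card_subtype, Fintype.card_congr (mapEqEquivProd s t), Fintype.card_prod,
    Fintype.card_equiv (Fintype.equivOfCardEq hs), Fintype.card_equiv (Fintype.equivOfCardEq hsc),
    Fintype.card_subtype_compl, Fintype.card_coe]

end CountEquivs

section GoodStarts

variable {α : Type*} [DecidableEq α] [NeZero n] {𝒜 : Finset (Finset α)}

def goodStarts (r : ℕ) (𝒜 : Finset (Finset α)) (σ : ZMod n ≃ α) : Finset (ZMod n) :=
  {i | (arc r i).map σ.toEmbedding ∈ 𝒜}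

theorem mem_goodStarts {σ : ZMod n ≃ α} {i : ZMod n} :
    i ∈ goodStarts r 𝒜 σ ↔ (arc r i).map σ.toEmbedding ∈ 𝒜 := by
  simp [goodStarts]

theorem arcIntersecting_goodStarts (h𝒜 : (𝒜 : Set (Finset α)).Intersecting) (σ : ZMod n ≃ α) :
    ArcIntersecting r (goodStarts r 𝒜 σ) :=
  fun _ hi _ hi' hd => h𝒜 (mem_goodStarts.1 hi) (mem_goodStarts.1 hi') ((disjoint_map _).2 hd)

variable [Fintype α]

theorem sum_card_goodStarts (hα : Fintype.card α = n) (hsized : (𝒜 : Set (Finset α)).Sized r)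
    (hrn : r ≤ n) :
    ∑ σ : ZMod n ≃ α, #(goodStarts r 𝒜 σ) = n * (#𝒜 * (r ! * (n - r)!)) := by
  calc ∑ σ : ZMod n ≃ α, #(goodStarts r 𝒜 σ)
      = ∑ i : ZMod n, #{σ : ZMod n ≃ α | (arc r i).map σ.toEmbedding ∈ 𝒜} := by
        simp only [goodStarts, card_filter]
        exact sum_comm
    _ = ∑ i : ZMod n, ∑ A ∈ 𝒜, #{σ : ZMod n ≃ α | (arc r i).map σ.toEmbedding = A} :=
        sum_congr rfl fun i _ => (sum_card_fiberwise_eq_card_filter _ _ _).symm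
    _ = n * (#𝒜 * (r ! * (n - r)!)) := by
        rw [sum_congr rfl fun i _ => sum_congr rfl fun A hA => card_map_equiv_eq _ _
          (by rw [card_arc hrn, hsized hA]) (by rw [ZMod.card, hα])]
        simp [card_arc hrn, ZMod.card]

variable (hα : Fintype.card α = n) (hr : 2 * r < n) (h𝒜 : (𝒜 : Set (Finset α)).Intersecting)
  (hsized : (𝒜 : Set (Finset α)).Sized r) (hmax : #𝒜 = (n - 1).choose (r - 1))
include hα hr h𝒜 hsized hmax

theorem card_goodStarts_eq (hr₀ : 0 < r) (σ : ZMod n ≃ α) : #(goodStarts r 𝒜 σ) = r := by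
  have hle : ∀ σ ∈ (univ : Finset (ZMod n ≃ α)), #(goodStarts r 𝒜 σ) ≤ r :=
    fun σ _ => (arcIntersecting_goodStarts h𝒜 σ).card_le hr.le
  have hsum : ∑ σ : ZMod n ≃ α, #(goodStarts r 𝒜 σ) = ∑ _σ : ZMod n ≃ α, r := by
    rw [sum_card_goodStarts hα hsized (by omega), hmax, sum_const, Finset.card_univ,
      Fintype.card_equiv (Fintype.equivOfCardEq (by rw [ZMod.card, hα])), ZMod.card, smul_eq_mul,
      ← Nat.mul_factorial_pred (by omega : n ≠ 0), ← Nat.mul_factorial_pred (by omega : r ≠ 0),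
      ← Nat.choose_mul_factorial_mul_factorial (by omega : r - 1 ≤ n - 1),
      show n - 1 - (r - 1) = n - r by omega]
    ring
  exact (sum_eq_sum_iff_of_le hle).1 hsum σ (mem_univ σ)

theorem map_arc_sub_mem {σ : ZMod n ≃ α} {i : ZMod n} (hi : (arc r i).map σ.toEmbedding ∈ 𝒜)
    (hi' : (arc r (i + 1)).map σ.toEmbedding ∉ 𝒜) {k : ℕ} (hk : k < r) :
    (arc r (i - (k : ZMod n))).map σ.toEmbedding ∈ 𝒜 :=
  mem_goodStarts.1 <| (arcIntersecting_goodStarts h𝒜 σ).sub_mem_of_add_one_not_mem hr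
    (card_goodStarts_eq hα hr h𝒜 hsized hmax (by omega) σ) (mem_goodStarts.2 hi)
    (mt mem_goodStarts.1 hi') hk

end GoodStarts

section ListArrangement

variable {α : Type*} [Fintype α] [DecidableEq α] [NeZero n]

theorem length_eq_card_of_nodup {L : List α} (hL : L.Nodup) (hmem : ∀ x, x ∈ L) :
    L.length = Fintype.card α := by
  simpa using Fintype.card_congr (hL.getEquivOfForallMemList L hmem)

noncomputable def equivOfList (L : List α) (hL : L.Nodup) (hmem : ∀ x, x ∈ L)
    (hα : Fintype.card α = n) : ZMod n ≃ α :=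
  Equiv.ofBijective (fun z => L[z.val]'(length_eq_card_of_nodup hL hmem ▸ hα ▸ z.val_lt)) <|
    (Fintype.bijective_iff_injective_and_card _).2
      ⟨fun _ _ h => ZMod.val_injective n (hL.getElem_inj_iff.1 h), by rw [ZMod.card, hα]⟩

theorem map_arc_equivOfList {L : List α} (hL : L.Nodup) (hmem : ∀ x, x ∈ L)
    (hα : Fintype.card α = n) {l₁ l₂ l₃ : List α} (hsplit : L = l₁ ++ l₂ ++ l₃)
    (hr : l₂.length = r) :
    (arc r (l₁.length : ZMod n)).map (equivOfList L hL hmem hα).toEmbedding = l₂.toFinset := by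
  have hlen : l₁.length + r + l₃.length = n := by
    rw [← hα, ← length_eq_card_of_nodup hL hmem, hsplit]
    simp [hr, add_assoc]
  have hget : ∀ j (hj : j < r),
      equivOfList L hL hmem hα (l₁.length + j : ℕ) = l₂[j]'(hr ▸ hj) := by
    intro j hj
    subst hsplit
    simp only [equivOfList, Equiv.ofBijective_apply,
      ZMod.val_natCast_of_lt (show l₁.length + j < n by omega)]
    simp [hr, hj]
  ext x
  simp only [mem_map, mem_arc, Equiv.coe_toEmbedding, List.mem_toFinset, List.mem_iff_getElem]
  constructor
  · rintro ⟨_, ⟨j, hj, rfl⟩, rfl⟩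
    exact ⟨j, hr ▸ hj, by rw [← Nat.cast_add, hget j hj]⟩
  · rintro ⟨j, hj, rfl⟩
    exact ⟨_, ⟨j, hr ▸ hj, rfl⟩, by rw [← Nat.cast_add, hget j (hr ▸ hj)]⟩

theorem exists_arrangement_of_exchange (hα : Fintype.card α = n) {B C : Finset α} {b c : α}
    (hB : #B = r) (hC : #C = r) (hbB : b ∈ B) (hbC : b ∈ C) (hcB : c ∉ B) (hcC : c ∉ C) :
    ∃ (σ : ZMod n ≃ α) (i : ZMod n) (k : ℕ), k < r ∧ (arc r i).map σ.toEmbedding = B ∧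
      (arc r (i + 1)).map σ.toEmbedding = insert c (B.erase b) ∧
      (arc r (i - (k : ZMod n))).map σ.toEmbedding = C := by
  set P₁ := (C \ B).toList
  set P₂ := ((B ∩ C).erase b).toList
  set P₃ := (B \ C).toList
  set P₄ := (univ \ insert c (B ∪ C)).toList
  have hL : (P₁ ++ b :: P₂ ++ P₃ ++ c :: P₄).Nodup := by
    simp only [P₁, P₂, P₃, P₄, List.nodup_append, List.nodup_cons, nodup_toList,
      List.mem_append, List.mem_cons, mem_toList]
    grind
  have hmem : ∀ x, x ∈ P₁ ++ b :: P₂ ++ P₃ ++ c :: P₄ := by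
    intro x
    simp only [P₁, P₂, P₃, P₄, List.mem_append, List.mem_cons, mem_toList]
    grind
  have hbBC : b ∈ B ∩ C := mem_inter.2 ⟨hbB, hbC⟩
  have hP₂ : P₂.length + 1 = #(B ∩ C) := by
    rw [length_toList, card_erase_add_one hbBC]
  have hP₁ : P₁.length + #(B ∩ C) = r := by
    rw [length_toList, inter_comm, card_sdiff_add_card_inter, hC]
  have hP₃ : P₃.length + #(B ∩ C) = r := by
    rw [length_toList, card_sdiff_add_card_inter, hB]
  -- with `k = #(C \ B)`, the arcs starting at `0`, `k` and `k + 1` are `C`, `B` and `B - b + c`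
  set σ := equivOfList _ hL hmem hα
  refine ⟨σ, P₁.length, P₁.length, by omega, ?_, ?_, ?_⟩
  · rw [map_arc_equivOfList (r := r) hL hmem hα (l₂ := b :: P₂ ++ P₃) (l₃ := c :: P₄) (by simp)
      (by simp only [List.length_append, List.length_cons]; omega)]
    ext x
    simp only [P₂, P₃, List.mem_toFinset, List.mem_append, List.mem_cons, mem_toList]
    grind
  · convert map_arc_equivOfList (r := r) hL hmem hα (l₁ := P₁ ++ [b]) (l₂ := P₂ ++ P₃ ++ [c])
      (l₃ := P₄) (by simp) (by simp only [List.length_append, List.length_singleton]; omega)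
      using 3
    · simp
    ext x
    simp only [P₂, P₃, List.mem_toFinset, List.mem_append, List.mem_cons, mem_toList]
    grind
  · rw [sub_self]
    convert map_arc_equivOfList (r := r) hL hmem hα (l₁ := []) (l₂ := P₁ ++ b :: P₂)
      (l₃ := P₃ ++ c :: P₄) (by simp) (by simp only [List.length_append, List.length_cons]; omega)
      using 3
    · simp
    ext x
    simp only [P₁, P₂, List.mem_toFinset, List.mem_append, List.mem_cons, mem_toList]
    grind

end ListArrangement

section Exchange

variable {α : Type*} [Fintype α] [DecidableEq α] {𝒜 : Finset (Finset α)}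

theorem mem_of_exchange_not_mem [NeZero n] (hα : Fintype.card α = n) (hr : 2 * r < n)
    (h𝒜 : (𝒜 : Set (Finset α)).Intersecting) (hsized : (𝒜 : Set (Finset α)).Sized r)
    (hmax : #𝒜 = (n - 1).choose (r - 1)) {B : Finset α} {b c : α} (hB : B ∈ 𝒜) (hbB : b ∈ B)
    (hcB : c ∉ B) (hB' : insert c (B.erase b) ∉ 𝒜) {C : Finset α} (hC : #C = r) (hbC : b ∈ C)
    (hcC : c ∉ C) : C ∈ 𝒜 := by
  obtain ⟨σ, i, k, hk, hσB, hσB', hσC⟩ :=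
    exists_arrangement_of_exchange hα (hsized hB) hC hbB hbC hcB hcC
  exact hσC ▸ map_arc_sub_mem hα hr h𝒜 hsized hmax (hσB ▸ hB) (hσB' ▸ hB') hk

theorem exists_exchange_not_mem (h𝒜 : (𝒜 : Set (Finset α)).Intersecting)
    (hsized : (𝒜 : Set (Finset α)).Sized r) (hne : 𝒜.Nonempty) (hr : 2 * r ≤ Fintype.card α) :
    ∃ B ∈ 𝒜, ∃ b ∈ B, ∃ c ∉ B, insert c (B.erase b) ∉ 𝒜 := by
  by_contra! hclosed
  obtain ⟨B₀, hB₀⟩ := hne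
  obtain ⟨B, hB, hmin⟩ := exists_min_image 𝒜 (fun B => #(B ∩ B₀)) ⟨B₀, hB₀⟩
  obtain ⟨b, hb⟩ := not_disjoint_iff_nonempty_inter.1 (h𝒜 hB hB₀)
  have hpos := card_pos.2 ⟨b, hb⟩
  obtain ⟨c, hc⟩ : ∃ c, c ∉ B ∪ B₀ := by
    by_contra! hcover
    have := card_union_add_card_inter B B₀
    rw [eq_univ_of_forall hcover, Finset.card_univ, hsized hB, hsized hB₀] at this
    omega
  have hexch : insert c (B.erase b) ∩ B₀ = (B ∩ B₀).erase b := by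
    ext x
    simp only [mem_inter, mem_insert, mem_erase, mem_union] at hc ⊢
    grind
  have := hmin _ (hclosed B hB b (mem_inter.1 hb).1 c fun h => hc (mem_union_left _ h))
  rw [hexch, card_erase_of_mem hb] at this
  omega

theorem mem_of_forall_mem_of_not_mem {b c : α} (hbc : b ≠ c)
    (h𝒜 : (𝒜 : Set (Finset α)).Intersecting) (hr : 2 * r < Fintype.card α) (hr₀ : 0 < r)
    (hall : ∀ C : Finset α, #C = r → b ∈ C → c ∉ C → C ∈ 𝒜) {D : Finset α} (hD : D ∈ 𝒜)
    (hDr : #D = r) : b ∈ D := by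
  by_contra hbD
  have hroom : r - 1 ≤ #(insert b (insert c D))ᶜ := by
    have := (card_insert_le b (insert c D)).trans (Nat.succ_le_succ (card_insert_le c D))
    rw [card_compl]
    omega
  obtain ⟨T, hT, hTr⟩ := exists_subset_card_eq hroom
  have hbT : b ∉ T := fun h => by simpa using hT h
  have hcT : c ∉ insert b T := by
    rw [mem_insert, not_or]
    exact ⟨hbc.symm, fun h => by simpa using hT h⟩
  have hC := hall (insert b T) (by rw [card_insert_of_notMem hbT]; omega) (mem_insert_self b T) hcT
  refine h𝒜 hC hD (disjoint_left.2 fun x hx hxD => ?_)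
  obtain rfl | hxT := mem_insert.1 hx
  · exact hbD hxD
  · simpa [hxD] using hT hxT

end Exchange

end EKR

open EKR in
/-- **Erdős–Ko–Rado theorem (uniqueness).** If `r < n/2` and `𝒜` is a pairwise
intersecting family of `r`-element subsets of an `n`-element set with
`|𝒜| = C(n-1, r-1)`, then `𝒜` is the family of all `r`-element subsets
containing some fixed element `x`. -/
theorem ekr_uniqueness (n r : ℕ) (hr : 2 * r < n) (𝒜 : Finset (Finset (Fin n)))
    (hcard : ∀ A ∈ 𝒜, A.card = r)
    (hint : ∀ A ∈ 𝒜, ∀ B ∈ 𝒜, (A ∩ B).Nonempty)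
    (hmax : 𝒜.card = (n - 1).choose (r - 1)) :
    ∃ x : Fin n, ∀ A : Finset (Fin n), A ∈ 𝒜 ↔ (A.card = r ∧ x ∈ A) := by
  have h𝒜 : (𝒜 : Set (Finset (Fin n))).Intersecting := fun A hA B hB =>
    not_disjoint_iff_nonempty_inter.2 (hint A hA B hB)
  have hsized : (𝒜 : Set (Finset (Fin n))).Sized r := fun A hA => hcard A hA
  have hne : 𝒜.Nonempty := card_pos.1 (hmax ▸ Nat.choose_pos (by omega))
  have hr₀ : 0 < r := by
    obtain ⟨A, hA⟩ := hne
    exact hcard A hA ▸ card_pos.2 (by simpa using hint A hA A hA)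
  have : NeZero n := ⟨by omega⟩
  have hα : Fintype.card (Fin n) = n := Fintype.card_fin n
  obtain ⟨B, hB, b, hbB, c, hcB, hB'⟩ :=
    exists_exchange_not_mem h𝒜 hsized hne (by rw [hα]; omega)
  have hb : ∀ D ∈ 𝒜, b ∈ D := fun D hD =>
    mem_of_forall_mem_of_not_mem (ne_of_mem_of_not_mem hbB hcB) h𝒜 (by rw [hα]; omega) hr₀
      (fun _ => mem_of_exchange_not_mem hα hr h𝒜 hsized hmax hB hbB hcB hB') hD (hcard D hD)
  have hstar : 𝒜 = {A ∈ powersetCard r (univ : Finset (Fin n)) | {b} ⊆ A} := by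
    refine eq_of_subset_of_card_le (fun A hA => ?_) ?_
    · simp [hcard A hA, hb A hA]
    · rw [card_filter_powersetCard_subset _ _ _ (subset_univ _) (by rw [card_singleton]; omega),
        hmax]
      simp
  exact ⟨b, fun A => by simp [hstar]⟩
end

section
/- Let 2 ≤ r ≤ n/2 and let 𝒜 be a pairwise intersecting family of r-element subsets of {1,...,n} with no common element (⋂𝒜 = ∅, i.e., there is no x in all members). Then |𝒜| ≤ C(n-1, r-1) - C(n-r-1, r-1) + 1. -/
/-!
Replacing `j` by an absent `i < j` in the members of a family (where the result is new) keeps the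
family's size, the sizes of its members and cross-intersection, and lowers the sum of all elements
of all members, so families may be assumed stable under all such shifts.

Hilton's bound `|𝒜| + |ℬ| ≤ C(m, p) - C(m - p, p) + 1` for non-empty cross-intersecting families
of `p`-subsets of an `m`-set, `2p ≤ m`, is proved for shifted families: both contain `[p]`, so `𝒜`
misses the `p`-sets that meet `[p]` and avoid a member of `ℬ`, and by induction on `m` there are at
least `|ℬ| - 1` of those.

For Hilton–Milner, a non-trivial intersecting family is shifted as long as it stays non-trivial.
If a shift `j ↦ i` would create a star, every member meets `{i, j}`; the members through exactly
one of the two points then give two cross-intersecting `(r - 1)`-uniform families on the other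
`n - 2` points, and Hilton's bound applies. A shifted family is split according to the largest
point, and both parts are bounded by induction on `n`.
-/

open Finset
open scoped FinsetFamily

namespace HiltonMilner

section Families

variable {α β : Type*} {𝒜 ℬ : Finset (Finset α)} {V : Finset α} {a : α} {r : ℕ}

def CrossIntersecting (𝒜 ℬ : Finset (Finset α)) : Prop :=
  ∀ ⦃A⦄, A ∈ 𝒜 → ∀ ⦃B⦄, B ∈ ℬ → ¬Disjoint A B

lemma CrossIntersecting.symm (h : CrossIntersecting 𝒜 ℬ) : CrossIntersecting ℬ 𝒜 :=
  fun _ hB _ hA hd => h hA hB hd.symm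

lemma CrossIntersecting.image_image [DecidableEq β] (f : α → β) (h : CrossIntersecting 𝒜 ℬ) :
    CrossIntersecting (𝒜.image (image f)) (ℬ.image (image f)) := by
  simp only [CrossIntersecting, mem_image, not_disjoint_iff]
  rintro _ ⟨A, hA, rfl⟩ _ ⟨B, hB, rfl⟩
  obtain ⟨x, hxA, hxB⟩ := not_disjoint_iff.1 (h hA hB)
  exact ⟨f x, mem_image_of_mem f hxA, mem_image_of_mem f hxB⟩

lemma card_image_image [DecidableEq β] {f : α → β} (hf : Set.InjOn f V)
    (h𝒜 : 𝒜 ⊆ powersetCard r V) : #(𝒜.image (image f)) = #𝒜 :=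
  card_image_of_injOn <| (image_injOn_powerset_of_injOn hf).mono fun _ hA =>
    mem_coe.2 (mem_powerset.2 (mem_powersetCard.1 (h𝒜 hA)).1)

lemma image_image_subset_powersetCard [DecidableEq β] {f : α → β} {W : Finset β}
    (hf : Set.InjOn f V) (hfW : Set.MapsTo f V W) (h𝒜 : 𝒜 ⊆ powersetCard r V) :
    𝒜.image (image f) ⊆ powersetCard r W := by
  intro A' hA'
  obtain ⟨A, hA, rfl⟩ := mem_image.1 hA'
  obtain ⟨hAV, hAr⟩ := mem_powersetCard.1 (h𝒜 hA)
  exact mem_powersetCard.2 ⟨fun y hy => by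
    obtain ⟨x, hx, rfl⟩ := mem_image.1 hy
    exact hfW (hAV hx), by rw [card_image_of_injOn (hf.mono hAV), hAr]⟩

lemma exists_notMem_image_image [DecidableEq β] {f : α → β} (hf : Set.InjOn f V)
    (h𝒜 : 𝒜 ⊆ powersetCard r V) (hne : 𝒜.Nonempty) (hnc : ∀ x, ∃ A ∈ 𝒜, x ∉ A) (y : β) :
    ∃ A' ∈ 𝒜.image (image f), y ∉ A' := by
  have hAV : ∀ A ∈ 𝒜, A ⊆ V := fun A hA => (mem_powersetCard.1 (h𝒜 hA)).1
  by_cases hy : ∃ x ∈ V, f x = y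
  · obtain ⟨x, hxV, rfl⟩ := hy
    obtain ⟨A, hA, hxA⟩ := hnc x
    refine ⟨A.image f, mem_image_of_mem _ hA, fun h => ?_⟩
    obtain ⟨a, ha, hfa⟩ := mem_image.1 h
    exact hxA (hf (hAV A hA ha) hxV hfa ▸ ha)
  · obtain ⟨A, hA⟩ := hne
    refine ⟨A.image f, mem_image_of_mem _ hA, fun h => ?_⟩
    obtain ⟨a, ha, hfa⟩ := mem_image.1 h
    exact hy ⟨a, hAV A hA ha, hfa⟩

lemma exists_injOn_mapsTo_range (V : Finset α) :
    ∃ f : α → ℕ, Set.InjOn f V ∧ Set.MapsTo f V (range #V) := by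
  classical
  refine ⟨fun x => if h : x ∈ V then V.equivFin ⟨x, h⟩ else 0, fun x hx y hy hxy => ?_,
    fun x hx => ?_⟩
  · rw [mem_coe] at hx hy
    simp only [dif_pos hx, dif_pos hy] at hxy
    exact congrArg Subtype.val (V.equivFin.injective (Fin.ext hxy))
  · rw [mem_coe] at hx
    simp [dif_pos hx]

variable [DecidableEq α]

lemma filter_disjoint_powersetCard (s : ℕ) (U V : Finset α) :
    {X ∈ powersetCard s V | Disjoint X U} = powersetCard s (V \ U) := by
  ext X
  simp only [mem_filter, mem_powersetCard, subset_sdiff]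
  tauto

lemma card_filter_not_disjoint_powersetCard (s : ℕ) (U V : Finset α) :
    #{X ∈ powersetCard s V | ¬Disjoint X U} = (#V).choose s - (#(V \ U)).choose s := by
  have := card_filter_add_card_filter_not (s := powersetCard s V) (fun X => Disjoint X U)
  rw [filter_disjoint_powersetCard, card_powersetCard, card_powersetCard] at this
  omega

lemma nonMemberSubfamily_subset_powersetCard (h𝒜 : 𝒜 ⊆ powersetCard r V) :
    𝒜.nonMemberSubfamily a ⊆ powersetCard r (V.erase a) := by
  intro A hA
  rw [mem_nonMemberSubfamily] at hA
  obtain ⟨hAV, hAr⟩ := mem_powersetCard.1 (h𝒜 hA.1)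
  exact mem_powersetCard.2 ⟨subset_erase.2 ⟨hAV, hA.2⟩, hAr⟩

lemma memberSubfamily_subset_powersetCard (h𝒜 : 𝒜 ⊆ powersetCard (r + 1) V) :
    𝒜.memberSubfamily a ⊆ powersetCard r (V.erase a) := by
  intro A hA
  rw [mem_memberSubfamily] at hA
  obtain ⟨hAV, hAr⟩ := mem_powersetCard.1 (h𝒜 hA.1)
  rw [card_insert_of_notMem hA.2] at hAr
  exact mem_powersetCard.2 ⟨subset_erase.2 ⟨(subset_insert a A).trans hAV, hA.2⟩, by omega⟩

end Families

section Compression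

variable {α : Type*} [DecidableEq α] {𝒜 ℬ : Finset (Finset α)} {A B : Finset α} {i j x : α}

lemma compress_singleton (hij : i ≠ j) (A : Finset α) :
    UV.compress {i} {j} A = if i ∉ A ∧ j ∈ A then insert i (A.erase j) else A := by
  unfold UV.compress
  simp only [disjoint_singleton_left, singleton_subset_iff, sup_eq_union, union_singleton,
    sdiff_singleton_eq_erase, erase_insert_of_ne hij]

lemma mem_of_mem_compress_singleton (hx : x ∈ UV.compress {i} {j} A) (hxi : x ≠ i) : x ∈ A := by
  unfold UV.compress at hx
  split_ifs at hx
  · simp_all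
  · exact hx

-- If the shift moves `A` off the only common point `j` of `A` and `B`, and `i ∉ B`, then `B` is
-- shifted too and meets `A` outside `{i, j}`.
lemma not_disjoint_compress_singleton (hAB : ¬Disjoint A B)
    (hAB' : ¬Disjoint A (UV.compress {i} {j} B)) : ¬Disjoint (UV.compress {i} {j} A) B := by
  obtain rfl | hij := eq_or_ne i j
  · rwa [UV.compress_self]
  rw [compress_singleton hij] at hAB' ⊢
  split_ifs at hAB' ⊢ with hA hB <;> simp only [not_disjoint_iff, mem_insert, mem_erase] at * <;>
    grind

lemma CrossIntersecting.compression (h : CrossIntersecting 𝒜 ℬ) :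
    CrossIntersecting (𝓒 {i} {j} 𝒜) (𝓒 {i} {j} ℬ) := by
  intro A' hA' B' hB'
  rcases UV.mem_compression.1 hA' with ⟨hA, hcA⟩ | ⟨hA'𝒜, A, hA, rfl⟩ <;>
    rcases UV.mem_compression.1 hB' with ⟨hB, hcB⟩ | ⟨hB'ℬ, B, hB, rfl⟩
  · exact h hA hB
  · exact fun hd => not_disjoint_compress_singleton (h.symm hB hA) (h.symm hB hcA) hd.symm
  · exact not_disjoint_compress_singleton (h hA hB) (h hA hcB)
  · have hi := UV.le_of_mem_compression_of_notMem hA' hA'𝒜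
    have hi' := UV.le_of_mem_compression_of_notMem hB' hB'ℬ
    exact not_disjoint_iff.2 ⟨i, singleton_subset_iff.1 hi, singleton_subset_iff.1 hi'⟩

lemma mem_or_mem_of_forall_mem_compression {z : α} (hnc : ∀ x, ∃ A ∈ 𝒜, x ∉ A)
    (hz : ∀ A ∈ 𝓒 {i} {j} 𝒜, z ∈ A) : ∀ A ∈ 𝒜, i ∈ A ∨ j ∈ A := by
  by_contra! ⟨A₀, hA₀, hiA₀, hjA₀⟩
  have hfix : UV.compress {i} {j} A₀ = A₀ := by
    unfold UV.compress; simp [hjA₀]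
  have hzi : z ≠ i := by
    rintro rfl
    exact hiA₀ (hfix ▸ hz _ (UV.compress_mem_compression hA₀))
  obtain ⟨A, hA, hzA⟩ := hnc z
  exact hzA (mem_of_mem_compress_singleton (hz _ (UV.compress_mem_compression hA)) hzi)

lemma sum_compression {M : Type*} [AddCommMonoid M] (u v : Finset α) (𝒜 : Finset (Finset α))
    (f : Finset α → M) :
    ∑ A ∈ 𝓒 u v 𝒜, f A =
      ∑ A ∈ 𝒜, if UV.compress u v A ∈ 𝒜 then f A else f (UV.compress u v A) := by
  rw [UV.compression, sum_union UV.compress_disjoint, filter_image, sum_image UV.compress_injOn,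
    sum_ite]

end Compression

section Shifting

variable {𝒜 ℬ 𝒢 : Finset (Finset ℕ)} {A D Y : Finset ℕ} {i j m n r : ℕ}

def IsShifted (𝒜 : Finset (Finset ℕ)) : Prop :=
  ∀ A ∈ 𝒜, ∀ ⦃i j⦄, i < j → i ∉ A → j ∈ A → insert i (A.erase j) ∈ 𝒜

lemma erase_range_add_one (m : ℕ) : (range (m + 1)).erase m = range m := by
  rw [range_add_one, erase_insert notMem_range_self]

lemma card_range_sdiff_range (M q : ℕ) : #(range M \ range q) = M - q := by
  rw [range_eq_Ico, range_eq_Ico, Ico_sdiff_Ico_left]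
  simp

lemma card_insert_erase (hi : i ∉ A) (hj : j ∈ A) : #(insert i (A.erase j)) = #A := by
  rw [card_insert_of_notMem fun h => hi (mem_of_mem_erase h), card_erase_add_one hj]

lemma sum_insert_erase_lt (hij : i < j) (hi : i ∉ A) (hj : j ∈ A) :
    ∑ x ∈ insert i (A.erase j), x < ∑ x ∈ A, x := by
  rw [sum_insert fun h => hi (mem_of_mem_erase h), ← add_sum_erase A (fun x => x) hj]
  omega

lemma sum_compress_singleton_le (hij : i < j) (A : Finset ℕ) :
    ∑ x ∈ UV.compress {i} {j} A, x ≤ ∑ x ∈ A, x := by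
  rw [compress_singleton hij.ne]
  split_ifs with h
  · exact (sum_insert_erase_lt hij h.1 h.2).le
  · rfl

lemma sum_sum_compression_le (hij : i < j) (𝒜 : Finset (Finset ℕ)) :
    ∑ A ∈ 𝓒 {i} {j} 𝒜, ∑ x ∈ A, x ≤ ∑ A ∈ 𝒜, ∑ x ∈ A, x := by
  rw [sum_compression]
  refine sum_le_sum fun A _ => ?_
  split_ifs
  exacts [le_rfl, sum_compress_singleton_le hij A]

lemma sum_sum_compression_lt (hij : i < j) (hA : A ∈ 𝒜) (hA' : UV.compress {i} {j} A ∉ 𝒜) :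
    ∑ A ∈ 𝓒 {i} {j} 𝒜, ∑ x ∈ A, x < ∑ A ∈ 𝒜, ∑ x ∈ A, x := by
  rw [sum_compression]
  refine sum_lt_sum (fun A _ => ?_) ⟨A, hA, ?_⟩
  · split_ifs
    exacts [le_rfl, sum_compress_singleton_le hij A]
  · rw [if_neg hA']
    rw [compress_singleton hij.ne] at hA' ⊢
    split_ifs at hA' ⊢ with h
    · exact sum_insert_erase_lt hij h.1 h.2
    · exact absurd hA hA'

lemma exists_compress_notMem_of_not_isShifted (h : ¬IsShifted 𝒜) :
    ∃ i j, i < j ∧ ∃ A ∈ 𝒜, UV.compress {i} {j} A ∉ 𝒜 := by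
  simp only [IsShifted, not_forall] at h
  obtain ⟨A, hA, i, j, hij, hi, hj, hA'⟩ := h
  refine ⟨i, j, hij, A, hA, ?_⟩
  rwa [compress_singleton hij.ne, if_pos ⟨hi, hj⟩]

theorem shifting_induction {P : Finset (Finset ℕ) → Finset (Finset ℕ) → Prop}
    (shifted : ∀ 𝒜 ℬ, IsShifted 𝒜 → IsShifted ℬ → P 𝒜 ℬ)
    (compression : ∀ 𝒜 ℬ i j, i < j → P (𝓒 {i} {j} 𝒜) (𝓒 {i} {j} ℬ) → P 𝒜 ℬ)
    (𝒜 ℬ : Finset (Finset ℕ)) : P 𝒜 ℬ := by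
  induction hN : ∑ A ∈ 𝒜, ∑ x ∈ A, x + ∑ B ∈ ℬ, ∑ x ∈ B, x using Nat.strong_induction_on
    generalizing 𝒜 ℬ with
  | _ N ih =>
  by_cases h𝒜 : IsShifted 𝒜
  · by_cases hℬ : IsShifted ℬ
    · exact shifted 𝒜 ℬ h𝒜 hℬ
    obtain ⟨i, j, hij, B, hB, hB'⟩ := exists_compress_notMem_of_not_isShifted hℬ
    refine compression 𝒜 ℬ i j hij (ih _ ?_ _ _ rfl)
    have := sum_sum_compression_le hij 𝒜
    have := sum_sum_compression_lt hij hB hB'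
    omega
  · obtain ⟨i, j, hij, A, hA, hA'⟩ := exists_compress_notMem_of_not_isShifted h𝒜
    refine compression 𝒜 ℬ i j hij (ih _ ?_ _ _ rfl)
    have := sum_sum_compression_lt hij hA hA'
    have := sum_sum_compression_le hij ℬ
    omega

lemma compression_subset_powersetCard (hij : i < j) (h𝒜 : 𝒜 ⊆ powersetCard r (range n)) :
    𝓒 {i} {j} 𝒜 ⊆ powersetCard r (range n) := by
  intro A' hA'
  rcases UV.mem_compression.1 hA' with ⟨hA, -⟩ | ⟨-, A, hA, rfl⟩
  · exact h𝒜 hA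
  obtain ⟨hAn, hAr⟩ := mem_powersetCard.1 (h𝒜 hA)
  rw [compress_singleton hij.ne]
  split_ifs with h
  · refine mem_powersetCard.2 ⟨insert_subset (mem_range.2 ?_) ((erase_subset j A).trans hAn), ?_⟩
    · exact hij.trans (mem_range.1 (hAn h.2))
    · rw [card_insert_erase h.1 h.2, hAr]
  · exact h𝒜 hA

lemma IsShifted.Ico_mem (hS : IsShifted 𝒜) (hA : A ∈ 𝒜) {a : ℕ} (ha : ∀ x ∈ A, a ≤ x) :
    Ico a (a + #A) ∈ 𝒜 := by
  induction hN : ∑ x ∈ A, x using Nat.strong_induction_on generalizing A with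
  | _ N ih =>
  have hcard : #(Ico a (a + #A)) = #A := by simp
  by_cases hsub : A ⊆ Ico a (a + #A)
  · rwa [← eq_of_subset_of_card_le hsub hcard.le]
  have hsup : ¬Ico a (a + #A) ⊆ A := fun h => hsub (eq_of_subset_of_card_le h hcard.ge).ge
  obtain ⟨j, hjA, hj⟩ := not_subset.1 hsub
  obtain ⟨i, hi, hiA⟩ := not_subset.1 hsup
  have hij : i < j := by
    have := ha j hjA
    simp only [mem_Ico, not_and, not_lt] at hi hj
    omega
  have hA' := hS A hA hij hiA hjA
  rw [← card_insert_erase hiA hjA]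
  refine ih _ (hN ▸ sum_insert_erase_lt hij hiA hjA) hA' (fun x hx => ?_) rfl
  rcases mem_insert.1 hx with rfl | hx
  · exact (mem_Ico.1 hi).1
  · exact ha x (mem_of_mem_erase hx)

lemma IsShifted.range_card_mem (hS : IsShifted 𝒜) (hA : A ∈ 𝒜) : range #A ∈ 𝒜 := by
  have := hS.Ico_mem hA (a := 0) fun _ _ => Nat.zero_le _
  rwa [zero_add, ← range_eq_Ico] at this

lemma IsShifted.zero_mem_of_forall_mem (hS : IsShifted 𝒜) {y : ℕ} (hy : ∀ A ∈ 𝒜, y ∈ A) :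
    ∀ A ∈ 𝒜, 0 ∈ A := by
  intro A hA
  by_contra h0
  have hy0 : y ≠ 0 := fun h => h0 (h ▸ hy A hA)
  have := hy _ (hS A hA (Nat.pos_of_ne_zero hy0) h0 (hy A hA))
  simp [hy0] at this

lemma IsShifted.nonMemberSubfamily (hS : IsShifted 𝒜) (h𝒜 : ∀ A ∈ 𝒜, A ⊆ range (m + 1)) :
    IsShifted (𝒜.nonMemberSubfamily m) := by
  intro A hA i j hij hi hj
  rw [mem_nonMemberSubfamily] at hA ⊢
  have hjm : j < m := lt_of_le_of_ne (Nat.lt_succ_iff.1 (mem_range.1 (h𝒜 A hA.1 hj)))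
    fun h => hA.2 (h ▸ hj)
  refine ⟨hS A hA.1 hij hi hj, ?_⟩
  simp only [mem_insert, mem_erase, not_or, not_and]
  exact ⟨by omega, fun _ => hA.2⟩

lemma IsShifted.memberSubfamily (hS : IsShifted 𝒜) (h𝒜 : ∀ A ∈ 𝒜, A ⊆ range (m + 1)) :
    IsShifted (𝒜.memberSubfamily m) := by
  intro D hD i j hij hi hj
  rw [mem_memberSubfamily] at hD ⊢
  have hjm : j < m := lt_of_le_of_ne
    (Nat.lt_succ_iff.1 (mem_range.1 (h𝒜 _ hD.1 (mem_insert_of_mem hj)))) fun h => hD.2 (h ▸ hj)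
  have hD' := hS _ hD.1 hij (by simp [hi]; omega) (mem_insert_of_mem hj)
  rw [erase_insert_of_ne (by omega), insert_comm] at hD'
  refine ⟨hD', ?_⟩
  simp only [mem_insert, mem_erase, not_or, not_and]
  exact ⟨by omega, fun _ => hD.2⟩

lemma IsShifted.exists_insert_mem (hS : IsShifted 𝒜) (hD : D ∈ 𝒜.memberSubfamily m)
    (hcard : #D + #Y < m) : ∃ i < m, i ∉ D ∧ i ∉ Y ∧ insert i D ∈ 𝒜 := by
  rw [mem_memberSubfamily] at hD
  have : ¬range m ⊆ D ∪ Y := fun h => by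
    have := card_le_card h
    have := card_union_le D Y
    simp only [card_range] at *
    omega
  obtain ⟨i, hi, hiDY⟩ := not_subset.1 this
  rw [mem_range] at hi
  rw [mem_union, not_or] at hiDY
  have := hS _ hD.1 hi (by simp [hiDY.1]; omega) (mem_insert_self m D)
  rw [erase_insert hD.2] at this
  exact ⟨i, hi, hiDY.1, hiDY.2, this⟩

lemma IsShifted.intersecting_memberSubfamily (hS : IsShifted 𝒢)
    (hint : (𝒢 : Set (Finset ℕ)).Intersecting) (h𝒢 : 𝒢 ⊆ powersetCard (r + 1) (range (m + 1)))
    (hrm : 2 * r < m) : (𝒢.memberSubfamily m : Set (Finset ℕ)).Intersecting := by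
  intro D hD E hE hDE
  have hsize := memberSubfamily_subset_powersetCard (a := m) h𝒢
  have hDr := (mem_powersetCard.1 (hsize hD)).2
  have hEr := (mem_powersetCard.1 (hsize hE)).2
  obtain ⟨i, him, hiD, hiE, hiD'⟩ := hS.exists_insert_mem hD (Y := E) (by omega)
  refine hint hiD' (mem_memberSubfamily.1 hE).1 ?_
  simp only [disjoint_insert_left, disjoint_insert_right, mem_insert, not_or]
  exact ⟨⟨him.ne', (mem_memberSubfamily.1 hD).2⟩, hiE, hDE⟩

end Shifting

section Avoiding

variable {ℬ : Finset (Finset ℕ)} {X : Finset ℕ} {s u m M q : ℕ}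

def avoidingSets (s m : ℕ) (ℬ : Finset (Finset ℕ)) : Finset (Finset ℕ) :=
  {X ∈ powersetCard s (range m) | ∃ B ∈ ℬ, Disjoint X B}

lemma mem_avoidingSets :
    X ∈ avoidingSets s m ℬ ↔ (X ⊆ range m ∧ #X = s) ∧ ∃ B ∈ ℬ, Disjoint X B := by
  rw [avoidingSets, mem_filter, mem_powersetCard]

lemma card_filter_avoidingSets_add_le (hS : IsShifted ℬ)
    (hℬ : ℬ ⊆ powersetCard (u + 1) (range (m + 1))) (hum : 2 * u < m)
    (P : Finset ℕ → Prop) [DecidablePred P] (hP : ∀ X, P X → P (insert m X)) :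
    #{X ∈ avoidingSets (u + 1) m (ℬ.nonMemberSubfamily m) | P X} +
        #{X ∈ avoidingSets u m (ℬ.memberSubfamily m) | P X} ≤
      #{X ∈ avoidingSets (u + 1) (m + 1) ℬ | P X} := by
  rw [← card_memberSubfamily_add_card_nonMemberSubfamily m
    {X ∈ avoidingSets (u + 1) (m + 1) ℬ | P X}, add_comm]
  refine add_le_add (card_le_card fun Y hY => ?_) (card_le_card fun X hX => ?_)
  · rw [mem_memberSubfamily]
    simp only [mem_filter, mem_avoidingSets] at hY ⊢
    obtain ⟨⟨⟨hYm, hYu⟩, D, hD, hYD⟩, hPY⟩ := hY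
    have hmY : m ∉ Y := fun h => by simpa using hYm h
    have hDu := (mem_powersetCard.1 (memberSubfamily_subset_powersetCard hℬ hD)).2
    -- `insert m Y` avoids the member obtained from `insert m D` by shifting `m` outside `D ∪ Y`
    obtain ⟨i, him, hiD, hiY, hiD'⟩ := hS.exists_insert_mem hD (Y := Y) (by omega)
    refine ⟨⟨⟨⟨?_, by rw [card_insert_of_notMem hmY, hYu]⟩, _, hiD', ?_⟩, hP Y hPY⟩, hmY⟩
    · rw [range_add_one]
      exact insert_subset_insert m hYm
    · simp only [disjoint_insert_left, disjoint_insert_right, mem_insert, not_or]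
      exact ⟨⟨him.ne, hiY⟩, (mem_memberSubfamily.1 hD).2, hYD⟩
  · simp only [mem_filter, mem_avoidingSets, mem_nonMemberSubfamily] at hX ⊢
    obtain ⟨⟨⟨hXm, hXu⟩, B, ⟨hB, -⟩, hXB⟩, hPX⟩ := hX
    exact ⟨⟨⟨⟨hXm.trans (range_subset_range.2 m.le_succ), hXu⟩, B, hB, hXB⟩, hPX⟩,
      fun h => by simpa using hXm h⟩

theorem card_le_card_avoidingSets (hS : IsShifted ℬ) (hℬ : ℬ ⊆ powersetCard u (range M))
    (hM : 2 * u ≤ M) : #ℬ ≤ #(avoidingSets u M ℬ) := by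
  induction M using Nat.strong_induction_on generalizing u ℬ with
  | _ M ih =>
  rcases hM.eq_or_lt with rfl | hlt
  · refine card_le_card_of_injOn (range (2 * u) \ ·) (fun B hB => ?_) (fun B hB B' hB' h => ?_)
    · obtain ⟨hBM, hBu⟩ := mem_powersetCard.1 (hℬ hB)
      rw [mem_coe, mem_avoidingSets, card_sdiff_of_subset hBM, card_range, hBu]
      exact ⟨⟨sdiff_subset, by omega⟩, B, hB, sdiff_disjoint⟩
    · rw [← Finset.sdiff_sdiff_eq_self (mem_powersetCard.1 (hℬ hB)).1,
        ← Finset.sdiff_sdiff_eq_self (mem_powersetCard.1 (hℬ hB')).1]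
      exact congrArg _ h
  obtain ⟨m, rfl⟩ : ∃ m, M = m + 1 := ⟨M - 1, by omega⟩
  rcases u with _ | u
  · refine card_le_card_of_injOn (fun _ => ∅) (fun B hB => ?_) (fun B hB B' hB' _ => ?_)
    · rw [mem_coe, mem_avoidingSets]
      exact ⟨⟨empty_subset _, card_empty⟩, B, hB, disjoint_empty_left B⟩
    · rw [card_eq_zero.1 (mem_powersetCard.1 (hℬ hB)).2,
        card_eq_zero.1 (mem_powersetCard.1 (hℬ hB')).2]
  have hℬm : ∀ B ∈ ℬ, B ⊆ range (m + 1) := fun B hB => (mem_powersetCard.1 (hℬ hB)).1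
  have h₀ := ih m (by omega) (hS.nonMemberSubfamily hℬm)
    (erase_range_add_one m ▸ nonMemberSubfamily_subset_powersetCard hℬ) (by omega)
  have h₁ := ih m (by omega) (hS.memberSubfamily hℬm)
    (erase_range_add_one m ▸ memberSubfamily_subset_powersetCard hℬ) (by omega)
  have := card_filter_avoidingSets_add_le hS hℬ (by omega) (fun _ => True) fun _ _ => trivial
  simp only [filter_true] at this
  have := card_memberSubfamily_add_card_nonMemberSubfamily m ℬ
  omega

theorem card_le_card_filter_avoidingSets (hS : IsShifted ℬ) (hℬ : ℬ ⊆ powersetCard u (range M))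
    (hq : ∀ B ∈ ℬ, ¬Disjoint B (range q)) (huq : u ≤ q) (hM : 2 * u ≤ M) :
    #ℬ ≤ #{X ∈ avoidingSets u M ℬ | ¬Disjoint X (range q)} + if u = q then 1 else 0 := by
  induction M using Nat.strong_induction_on generalizing u ℬ with
  | _ M ih =>
  obtain rfl | hu := Nat.eq_zero_or_pos u
  · have : ℬ = ∅ := eq_empty_of_forall_notMem fun B hB => hq B hB <| by
      rw [card_eq_zero.1 (mem_powersetCard.1 (hℬ hB)).2]
      exact disjoint_empty_left _
    simp [this]
  by_cases hbase : M < q + u ∨ M = 2 * u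
  · -- at most `[u = q]` of the `u`-subsets of `range M` avoid `range q`
    have hsplit := card_filter_add_card_filter_not (s := avoidingSets u M ℬ)
      fun X => ¬Disjoint X (range q)
    have hdisj : #{X ∈ avoidingSets u M ℬ | ¬¬Disjoint X (range q)} ≤ (M - q).choose u := by
      rw [← card_range_sdiff_range, ← card_powersetCard, ← filter_disjoint_powersetCard]
      refine card_le_card fun X hX => ?_
      simp only [mem_filter, mem_avoidingSets, not_not, mem_powersetCard] at hX ⊢
      exact ⟨hX.1.1, hX.2⟩
    have herr : (M - q).choose u ≤ if u = q then 1 else 0 := by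
      split_ifs with h
      · exact (Nat.choose_le_choose u (by omega)).trans (Nat.choose_self u).le
      · exact (Nat.choose_eq_zero_of_lt (by omega)).le
    have := card_le_card_avoidingSets hS hℬ hM
    omega
  rw [not_or, not_lt] at hbase
  obtain ⟨m, rfl⟩ : ∃ m, M = m + 1 := ⟨M - 1, by omega⟩
  obtain ⟨u, rfl⟩ : ∃ v, u = v + 1 := ⟨u - 1, by omega⟩
  have hℬm : ∀ B ∈ ℬ, B ⊆ range (m + 1) := fun B hB => (mem_powersetCard.1 (hℬ hB)).1
  have h₀ := ih m (by omega) (hS.nonMemberSubfamily hℬm)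
    (erase_range_add_one m ▸ nonMemberSubfamily_subset_powersetCard hℬ)
    (fun B hB => hq B (mem_nonMemberSubfamily.1 hB).1) huq (by omega)
  have h₁ := ih m (by omega) (hS.memberSubfamily hℬm)
    (erase_range_add_one m ▸ memberSubfamily_subset_powersetCard hℬ)
    (fun D hD hDq => hq _ (mem_memberSubfamily.1 hD).1
      (disjoint_insert_left.2 ⟨by simp only [mem_range]; omega, hDq⟩)) (by omega) (by omega)
  rw [if_neg (by omega : u ≠ q)] at h₁
  have := card_filter_avoidingSets_add_le hS hℬ (by omega) (fun X => ¬Disjoint X (range q))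
    fun X hX h => hX (h.mono_left (subset_insert m X))
  have := card_memberSubfamily_add_card_nonMemberSubfamily m ℬ
  omega

end Avoiding

section Hilton

variable {α : Type*} {p m : ℕ}

theorem IsShifted.card_add_card_le {𝒜 ℬ : Finset (Finset ℕ)} (hS𝒜 : IsShifted 𝒜)
    (hSℬ : IsShifted ℬ) (h𝒜 : 𝒜 ⊆ powersetCard p (range m)) (hℬ : ℬ ⊆ powersetCard p (range m))
    (h : CrossIntersecting 𝒜 ℬ) (h𝒜ne : 𝒜.Nonempty) (hℬne : ℬ.Nonempty) (hm : 2 * p ≤ m) :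
    #𝒜 + #ℬ ≤ m.choose p - (m - p).choose p + 1 := by
  obtain ⟨A, hA⟩ := h𝒜ne
  obtain ⟨B, hB⟩ := hℬne
  have hp𝒜 : range p ∈ 𝒜 := (mem_powersetCard.1 (h𝒜 hA)).2 ▸ hS𝒜.range_card_mem hA
  have hpℬ : range p ∈ ℬ := (mem_powersetCard.1 (hℬ hB)).2 ▸ hSℬ.range_card_mem hB
  have hT := card_le_card_filter_avoidingSets hSℬ hℬ (fun _ hB => h.symm hB hp𝒜) le_rfl hm
  rw [if_pos rfl] at hT
  -- `𝒜` and the witnesses avoiding a member of `ℬ` are disjoint families of sets meeting `[p]`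
  have hdisj : Disjoint 𝒜 {X ∈ avoidingSets p m ℬ | ¬Disjoint X (range p)} := by
    refine disjoint_left.2 fun X hX hX' => ?_
    obtain ⟨-, B, hB, hXB⟩ := mem_avoidingSets.1 (mem_filter.1 hX').1
    exact h hX hB hXB
  have hsub : 𝒜 ∪ {X ∈ avoidingSets p m ℬ | ¬Disjoint X (range p)} ⊆
      {X ∈ powersetCard p (range m) | ¬Disjoint X (range p)} :=
    union_subset (fun X hX => mem_filter.2 ⟨h𝒜 hX, h hX hpℬ⟩)
      (filter_subset_filter _ (filter_subset _ _))
  have := card_le_card hsub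
  rw [card_union_of_disjoint hdisj, card_filter_not_disjoint_powersetCard, card_range,
    card_range_sdiff_range] at this
  omega

theorem card_add_card_le_of_crossIntersecting_range {𝒜 ℬ : Finset (Finset ℕ)}
    (h𝒜 : 𝒜 ⊆ powersetCard p (range m)) (hℬ : ℬ ⊆ powersetCard p (range m))
    (h : CrossIntersecting 𝒜 ℬ) (h𝒜ne : 𝒜.Nonempty) (hℬne : ℬ.Nonempty) (hm : 2 * p ≤ m) :
    #𝒜 + #ℬ ≤ m.choose p - (m - p).choose p + 1 := by
  induction 𝒜, ℬ using shifting_induction with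
  | shifted 𝒜 ℬ hS𝒜 hSℬ => exact hS𝒜.card_add_card_le hSℬ h𝒜 hℬ h h𝒜ne hℬne hm
  | compression 𝒜 ℬ i j hij ih =>
    rw [← UV.card_compression {i} {j} 𝒜, ← UV.card_compression {i} {j} ℬ]
    rw [← card_pos, ← UV.card_compression {i} {j}, card_pos] at h𝒜ne hℬne
    exact ih (compression_subset_powersetCard hij h𝒜) (compression_subset_powersetCard hij hℬ)
      h.compression h𝒜ne hℬne

theorem card_add_card_le_of_crossIntersecting {V : Finset α} {𝒜 ℬ : Finset (Finset α)}
    (h𝒜 : 𝒜 ⊆ powersetCard p V) (hℬ : ℬ ⊆ powersetCard p V) (h : CrossIntersecting 𝒜 ℬ)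
    (h𝒜ne : 𝒜.Nonempty) (hℬne : ℬ.Nonempty) (hV : 2 * p ≤ #V) :
    #𝒜 + #ℬ ≤ (#V).choose p - (#V - p).choose p + 1 := by
  obtain ⟨f, hf, hfV⟩ := exists_injOn_mapsTo_range V
  rw [← card_image_image hf h𝒜, ← card_image_image hf hℬ]
  exact card_add_card_le_of_crossIntersecting_range (image_image_subset_powersetCard hf hfV h𝒜)
    (image_image_subset_powersetCard hf hfV hℬ) (h.image_image f) (h𝒜ne.image _)
    (hℬne.image _) hV

end Hilton

def hiltonMilnerBound (n r : ℕ) : ℕ := (n - 1).choose (r - 1) - (n - r - 1).choose (r - 1) + 1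

def HiltonMilnerHolds (n : ℕ) : Prop :=
  ∀ r (𝒢 : Finset (Finset ℕ)), 2 ≤ r → 2 * r ≤ n → 𝒢 ⊆ powersetCard r (range n) →
    (𝒢 : Set (Finset ℕ)).Intersecting → (∀ x, ∃ G ∈ 𝒢, x ∉ G) → #𝒢 ≤ hiltonMilnerBound n r

section Cover

variable {α : Type*} [DecidableEq α] {V U : Finset α} {𝒟 𝒢 : Finset (Finset α)} {a i j : α}
  {r s : ℕ}

lemma card_le_of_forall_mem_of_not_disjoint (h𝒟 : 𝒟 ⊆ powersetCard (s + 1) V) (haV : a ∈ V)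
    (hUV : U ⊆ V.erase a) (ha : ∀ D ∈ 𝒟, a ∈ D) (hU : ∀ D ∈ 𝒟, ¬Disjoint D U) :
    #𝒟 ≤ (#V - 1).choose s - (#V - 1 - #U).choose s := by
  have hnon : 𝒟.nonMemberSubfamily a = ∅ := eq_empty_of_forall_notMem fun D hD =>
    (mem_nonMemberSubfamily.1 hD).2 (ha D (mem_nonMemberSubfamily.1 hD).1)
  have hsub : 𝒟.memberSubfamily a ⊆ {E ∈ powersetCard s (V.erase a) | ¬Disjoint E U} := by
    intro E hE
    refine mem_filter.2 ⟨memberSubfamily_subset_powersetCard h𝒟 hE, fun hd => ?_⟩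
    exact hU _ (mem_memberSubfamily.1 hE).1
      (disjoint_insert_left.2 ⟨fun h => by simpa using hUV h, hd⟩)
  have := card_le_card hsub
  rw [card_filter_not_disjoint_powersetCard, card_sdiff_of_subset hUV, card_erase_of_mem haV]
    at this
  have := card_memberSubfamily_add_card_nonMemberSubfamily a 𝒟
  rw [hnon, card_empty] at this
  omega

lemma card_eq_of_forall_mem_or_mem (hcov : ∀ G ∈ 𝒢, i ∈ G ∨ j ∈ G) :
    #𝒢 = #((𝒢.memberSubfamily i).memberSubfamily j) +
      #((𝒢.memberSubfamily i).nonMemberSubfamily j) +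
      #((𝒢.nonMemberSubfamily i).memberSubfamily j) := by
  have hnone : (𝒢.nonMemberSubfamily i).nonMemberSubfamily j = ∅ := by
    refine eq_empty_of_forall_notMem fun G hG => ?_
    simp only [mem_nonMemberSubfamily] at hG
    exact (hcov G hG.1.1).elim hG.1.2 hG.2
  have := card_memberSubfamily_add_card_nonMemberSubfamily i 𝒢
  have := card_memberSubfamily_add_card_nonMemberSubfamily j (𝒢.memberSubfamily i)
  have := card_memberSubfamily_add_card_nonMemberSubfamily j (𝒢.nonMemberSubfamily i)
  rw [hnone, card_empty] at this
  omega

lemma crossIntersecting_nonMemberSubfamily_memberSubfamily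
    (hint : (𝒢 : Set (Finset α)).Intersecting) :
    CrossIntersecting ((𝒢.memberSubfamily i).nonMemberSubfamily j)
      ((𝒢.nonMemberSubfamily i).memberSubfamily j) := by
  intro A hA B hB hAB
  simp only [mem_nonMemberSubfamily, mem_memberSubfamily] at hA hB
  refine hint hA.1.1 hB.1.1 ?_
  rw [disjoint_insert_left, disjoint_insert_right]
  exact ⟨hB.1.2, hA.2, hAB⟩

theorem card_le_of_forall_mem_or_mem (hr : 2 ≤ r) (hV : 2 * r ≤ #V) (h𝒢 : 𝒢 ⊆ powersetCard r V)
    (hint : (𝒢 : Set (Finset α)).Intersecting) (hcov : ∀ G ∈ 𝒢, i ∈ G ∨ j ∈ G)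
    (hi : ∃ G ∈ 𝒢, i ∉ G) (hj : ∃ G ∈ 𝒢, j ∉ G) :
    #𝒢 ≤ hiltonMilnerBound #V r := by
  obtain ⟨s, rfl⟩ : ∃ s, r = s + 2 := ⟨r - 2, by omega⟩
  obtain ⟨Gi, hGi, hiGi⟩ := hi
  obtain ⟨Gj, hGj, hjGj⟩ := hj
  have hjGi : j ∈ Gi := (hcov Gi hGi).resolve_left hiGi
  have hiGj : i ∈ Gj := (hcov Gj hGj).resolve_right hjGj
  have hiV : i ∈ V := (mem_powersetCard.1 (h𝒢 hGj)).1 hiGj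
  have hjV : j ∈ V.erase i :=
    mem_erase.2 ⟨fun h => hiGi (h ▸ hjGi), (mem_powersetCard.1 (h𝒢 hGi)).1 hjGi⟩
  have hW : #((V.erase i).erase j) = #V - 2 := by
    rw [card_erase_of_mem hjV, card_erase_of_mem hiV]
    omega
  have hboth : #((𝒢.memberSubfamily i).memberSubfamily j) ≤ (#V - 2).choose s := by
    rw [← hW, ← card_powersetCard]
    exact card_le_card (memberSubfamily_subset_powersetCard
      (memberSubfamily_subset_powersetCard h𝒢))
  have hone := card_add_card_le_of_crossIntersecting
    (nonMemberSubfamily_subset_powersetCard (a := j)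
      (memberSubfamily_subset_powersetCard (a := i) h𝒢))
    (memberSubfamily_subset_powersetCard (a := j)
      (nonMemberSubfamily_subset_powersetCard (a := i) h𝒢))
    (crossIntersecting_nonMemberSubfamily_memberSubfamily hint)
    ⟨Gj.erase i, by simp [insert_erase hiGj, hGj, hjGj]⟩
    ⟨Gi.erase j, by simp [insert_erase hjGi, hGi, hiGi]⟩ (by omega)
  rw [hW, show #V - 2 - (s + 1) = #V - (s + 2) - 1 by omega] at hone
  have hpascal : (#V - 1).choose (s + 1) = (#V - 2).choose s + (#V - 2).choose (s + 1) := by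
    rw [show #V - 1 = #V - 2 + 1 by omega, Nat.choose_succ_succ']
  have hmono := Nat.choose_le_choose (s + 1) (show #V - (s + 2) - 1 ≤ #V - 2 by omega)
  rw [hiltonMilnerBound, show s + 2 - 1 = s + 1 by omega, card_eq_of_forall_mem_or_mem hcov]
  omega

end Cover

section Main

variable {𝒢 : Finset (Finset ℕ)} {m n r s : ℕ}

lemma card_le_choose_of_intersecting_two_mul (h𝒢 : 𝒢 ⊆ powersetCard r (range (2 * r)))
    (hint : (𝒢 : Set (Finset ℕ)).Intersecting) : #𝒢 ≤ (2 * r - 1).choose (r - 1) := by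
  rcases 𝒢.eq_empty_or_nonempty with rfl | hne
  · simp
  have := card_add_card_le_of_crossIntersecting_range h𝒢 h𝒢 hint hne hne le_rfl
  rcases r with _ | r
  · simp at this ⊢
    omega
  rw [show 2 * (r + 1) = 2 * r + 1 + 1 by ring, Nat.choose_succ_succ', Nat.choose_symm_half,
    show 2 * r + 1 + 1 - (r + 1) = r + 1 by omega, Nat.choose_self] at this
  rw [show 2 * (r + 1) - 1 = 2 * r + 1 by omega, Nat.add_sub_cancel]
  omega

lemma IsShifted.card_memberSubfamily_le_of_forall_mem (hS : IsShifted 𝒢)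
    (hsm : 2 * (s + 2) ≤ m) (h𝒢 : 𝒢 ⊆ powersetCard (s + 2) (range (m + 1)))
    (hint : (𝒢 : Set (Finset ℕ)).Intersecting) (hnc : ∀ x, ∃ G ∈ 𝒢, x ∉ G) {y : ℕ}
    (hy : ∀ D ∈ 𝒢.memberSubfamily m, y ∈ D) :
    #(𝒢.memberSubfamily m) ≤ (m - 1).choose s - (m - s - 3).choose s := by
  -- the star is centred at `0`, and its members meet `{1, …, s + 2} ∈ 𝒢`
  have h0 := (hS.memberSubfamily fun G hG => (mem_powersetCard.1 (h𝒢 hG)).1).zero_mem_of_forall_mem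
    hy
  obtain ⟨G₀, hG₀, h0G₀⟩ := hnc 0
  have hIco : Ico 1 (s + 3) ∈ 𝒢 := by
    have := hS.Ico_mem hG₀ (a := 1) fun x hx => Nat.one_le_iff_ne_zero.2 fun h => h0G₀ (h ▸ hx)
    rwa [(mem_powersetCard.1 (h𝒢 hG₀)).2, add_comm] at this
  have := card_le_of_forall_mem_of_not_disjoint
    (erase_range_add_one m ▸ memberSubfamily_subset_powersetCard h𝒢) (a := 0)
    (U := Ico 1 (s + 3)) (by simp; omega) (fun x hx => by simp at hx ⊢; omega) h0
    fun D hD hd => hint (mem_memberSubfamily.1 hD).1 hIco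
      (disjoint_insert_left.2 ⟨by simp; omega, hd⟩)
  simpa [show m - 1 - (s + 2) = m - s - 3 by omega] using this

lemma IsShifted.card_memberSubfamily_le (ih : HiltonMilnerHolds m) (hS : IsShifted 𝒢)
    (hsm : 2 * (s + 2) ≤ m) (h𝒢 : 𝒢 ⊆ powersetCard (s + 2) (range (m + 1)))
    (hint : (𝒢 : Set (Finset ℕ)).Intersecting) (hnc : ∀ x, ∃ G ∈ 𝒢, x ∉ G) :
    #(𝒢.memberSubfamily m) ≤ (m - 1).choose s - (m - s - 3).choose s := by
  by_cases hstar : ∃ y, ∀ D ∈ 𝒢.memberSubfamily m, y ∈ D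
  · obtain ⟨y, hy⟩ := hstar
    exact hS.card_memberSubfamily_le_of_forall_mem hsm h𝒢 hint hnc hy
  simp only [not_exists, not_forall, exists_prop] at hstar
  have h𝒟 : 𝒢.memberSubfamily m ⊆ powersetCard (s + 1) (range m) :=
    erase_range_add_one m ▸ memberSubfamily_subset_powersetCard h𝒢
  have hint' := hS.intersecting_memberSubfamily hint h𝒢 (by omega)
  -- intersecting families of singletons are stars
  obtain ⟨t, rfl⟩ : ∃ t, s = t + 1 := by
    refine ⟨s - 1, (Nat.succ_pred_eq_of_ne_zero fun hs => ?_).symm⟩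
    subst hs
    obtain ⟨D₀, hD₀, -⟩ := hstar 0
    obtain ⟨d, hd⟩ := card_eq_one.1 (mem_powersetCard.1 (h𝒟 hD₀)).2
    obtain ⟨D, hD, hdD⟩ := hstar d
    exact hint' hD hD₀ (hd ▸ disjoint_singleton_right.2 hdD)
  have := ih (t + 2) _ (by omega) (by omega) h𝒟 hint' hstar
  have hmono := Nat.choose_le_choose (t + 1) (show m - (t + 2) - 1 ≤ m - 1 by omega)
  rw [hiltonMilnerBound, show t + 2 - 1 = t + 1 by omega] at this
  rw [show m - (t + 2) - 1 = m - t - 4 + 1 by omega, Nat.choose_succ_succ'] at this hmono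
  have hpos := Nat.choose_pos (show t ≤ m - t - 4 by omega)
  rw [show m - (t + 1) - 3 = m - t - 4 by omega]
  omega

theorem IsShifted.card_le_hiltonMilnerBound_add_one (ih : HiltonMilnerHolds m)
    (hS : IsShifted 𝒢) (hr : 2 ≤ r) (hrm : 2 * r ≤ m) (h𝒢 : 𝒢 ⊆ powersetCard r (range (m + 1)))
    (hint : (𝒢 : Set (Finset ℕ)).Intersecting) (hnc : ∀ x, ∃ G ∈ 𝒢, x ∉ G) :
    #𝒢 ≤ hiltonMilnerBound (m + 1) r := by
  obtain ⟨s, rfl⟩ : ∃ s, r = s + 2 := ⟨r - 2, by omega⟩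
  have h𝒦 : 𝒢.nonMemberSubfamily m ⊆ powersetCard (s + 2) (range m) :=
    erase_range_add_one m ▸ nonMemberSubfamily_subset_powersetCard h𝒢
  by_cases hstar : ∃ y, ∀ K ∈ 𝒢.nonMemberSubfamily m, y ∈ K
  · obtain ⟨y, hy⟩ := hstar
    have hcov : ∀ G ∈ 𝒢, y ∈ G ∨ m ∈ G := fun G hG =>
      (em (m ∈ G)).elim Or.inr fun hmG => Or.inl (hy G (mem_nonMemberSubfamily.2 ⟨hG, hmG⟩))
    simpa using card_le_of_forall_mem_or_mem hr (by simp; omega) h𝒢 hint hcov (hnc y) (hnc m)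
  simp only [not_exists, not_forall, exists_prop] at hstar
  have h𝒦bound := ih (s + 2) _ hr hrm h𝒦 (hint.mono (filter_subset _ _)) hstar
  have h𝒟bound := hS.card_memberSubfamily_le ih hrm h𝒢 hint hnc
  have hcard := card_memberSubfamily_add_card_nonMemberSubfamily m 𝒢
  have hpascal₁ : m.choose (s + 1) = (m - 1).choose s + (m - 1).choose (s + 1) := by
    rw [show m = m - 1 + 1 by omega, Nat.choose_succ_succ', Nat.add_sub_cancel]
  have hpascal₂ :
      (m - s - 2).choose (s + 1) = (m - s - 3).choose s + (m - s - 3).choose (s + 1) := by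
    rw [show m - s - 2 = m - s - 3 + 1 by omega, Nat.choose_succ_succ']
  have hmono₁ := Nat.choose_le_choose s (show m - s - 3 ≤ m - 1 by omega)
  have hmono₂ := Nat.choose_le_choose (s + 1) (show m - s - 3 ≤ m - 1 by omega)
  simp only [hiltonMilnerBound, show s + 2 - 1 = s + 1 by omega, Nat.add_sub_cancel,
    show m - (s + 2) - 1 = m - s - 3 by omega, show m + 1 - (s + 2) - 1 = m - s - 2 by omega]
    at h𝒦bound ⊢
  omega

theorem hiltonMilnerHolds (n : ℕ) : HiltonMilnerHolds n := by
  induction n using Nat.strong_induction_on with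
  | _ n ih =>
  intro r 𝒢 hr hrn h𝒢 hint hnc
  rcases hrn.eq_or_lt with rfl | hlt
  · have := card_le_choose_of_intersecting_two_mul h𝒢 hint
    rwa [hiltonMilnerBound, show 2 * r - r - 1 = r - 1 by omega, Nat.choose_self,
      Nat.sub_add_cancel (Nat.choose_pos (by omega))]
  obtain ⟨m, rfl⟩ : ∃ m, n = m + 1 := ⟨n - 1, by omega⟩
  refine shifting_induction (P := fun 𝒢 _ => 𝒢 ⊆ powersetCard r (range (m + 1)) →
    (𝒢 : Set (Finset ℕ)).Intersecting → (∀ x, ∃ G ∈ 𝒢, x ∉ G) → #𝒢 ≤ hiltonMilnerBound (m + 1) r)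
    (fun 𝒢 _ hS _ h𝒢 hint hnc => ?_) (fun 𝒢 _ i j hij ih' h𝒢 hint hnc => ?_) 𝒢 ∅ h𝒢 hint hnc
  · exact hS.card_le_hiltonMilnerBound_add_one (ih m (by omega)) hr (by omega) h𝒢 hint hnc
  · by_cases hstar : ∃ z, ∀ A ∈ 𝓒 {i} {j} 𝒢, z ∈ A
    · obtain ⟨z, hz⟩ := hstar
      simpa using card_le_of_forall_mem_or_mem hr (by simp; omega) h𝒢 hint
        (mem_or_mem_of_forall_mem_compression hnc hz) (hnc i) (hnc j)
    · simp only [not_exists, not_forall, exists_prop] at hstar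
      rw [← UV.card_compression {i} {j} 𝒢]
      exact ih' (compression_subset_powersetCard hij h𝒢) (CrossIntersecting.compression hint) hstar

end Main

end HiltonMilner

open HiltonMilner

/-- **Hilton–Milner theorem.** If `2 ≤ r ≤ n/2` and `𝒜` is a pairwise
intersecting family of `r`-element subsets of an `n`-element set with no
common element, then `|𝒜| ≤ C(n-1,r-1) - C(n-r-1,r-1) + 1`. -/
theorem hilton_milner (n r : ℕ) (hr2 : 2 ≤ r) (hr : 2 * r ≤ n)
    (𝒜 : Finset (Finset (Fin n)))
    (hcard : ∀ A ∈ 𝒜, A.card = r)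
    (hint : ∀ A ∈ 𝒜, ∀ B ∈ 𝒜, (A ∩ B).Nonempty)
    (hnc : ¬ ∃ x : Fin n, ∀ A ∈ 𝒜, x ∈ A) :
    𝒜.card ≤ (n - 1).choose (r - 1) - (n - r - 1).choose (r - 1) + 1 := by
  rcases 𝒜.eq_empty_or_nonempty with rfl | hne
  · simp
  have h𝒜 : 𝒜 ⊆ powersetCard r univ := fun A hA => mem_powersetCard.2 ⟨subset_univ A, hcard A hA⟩
  have hval : Set.InjOn (Fin.val : Fin n → ℕ) (univ : Finset (Fin n)) := Fin.val_injective.injOn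
  push Not at hnc
  rw [← card_image_image hval h𝒜]
  exact hiltonMilnerHolds n r _ hr2 hr
    (image_image_subset_powersetCard hval (fun x _ => mem_range.2 x.isLt) h𝒜)
    (CrossIntersecting.image_image Fin.val fun A hA B hB =>
      not_disjoint_iff_nonempty_inter.2 (hint A hA B hB))
    (exists_notMem_image_image hval h𝒜 hne hnc)
end

section
/- The Hilton–Milner bound is attained: for 2 ≤ r ≤ n/2, the family consisting of the set A = {2,...,r+1} together with all r-element subsets of {1,...,n} containing 1 and intersecting A is an intersecting family with no common element whose size is exactly C(n-1,r-1) - C(n-r-1,r-1) + 1. -/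
open Finset in
lemma hm_helper (s : Finset ℕ) (a : ℕ) (k : ℕ) (ha : a ∉ s) :
    (((insert a s).powerset).filter (fun B => B.card = k + 1 ∧ a ∈ B)).card
      = s.card.choose k := by
  rw [← Finset.card_powersetCard]
  apply Finset.card_bij (fun B _ => B.erase a)
  · intro B hB
    simp only [mem_filter, mem_powerset] at hB
    obtain ⟨hsub, hcard, haB⟩ := hB
    simp only [mem_powersetCard]
    constructor
    · intro x hx
      simp only [mem_erase] at hx
      have := hsub hx.2
      simp only [mem_insert] at this
      tauto
    · rw [Finset.card_erase_of_mem haB, hcard]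
      omega
  · intro B hB C hC h
    simp only [mem_filter, mem_powerset] at hB hC
    have : insert a (B.erase a) = insert a (C.erase a) := by rw [h]
    rwa [Finset.insert_erase hB.2.2, Finset.insert_erase hC.2.2] at this
  · intro C hC
    simp only [mem_powersetCard] at hC
    refine ⟨insert a C, ?_, ?_⟩
    · simp only [mem_filter, mem_powerset]
      refine ⟨Finset.insert_subset_insert a hC.1, ?_, Finset.mem_insert_self a C⟩
      rw [Finset.card_insert_of_notMem (fun h => ha (hC.1 h)), hC.2]
    · rw [Finset.erase_insert (fun h => ha (hC.1 h))]

/-- **Sharpness of the Hilton–Milner bound.** For `2 ≤ r ≤ n/2`, the family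
consisting of `A₀ = {2,...,r+1}` together with all `r`-element subsets of
`{1,...,n}` containing `1` and intersecting `A₀` is an intersecting family
with no common element whose size is exactly `C(n-1,r-1) - C(n-r-1,r-1) + 1`. -/
theorem hilton_milner_sharp (n r : ℕ) (hr2 : 2 ≤ r) (hr : 2 * r ≤ n) :
    let A₀ : Finset ℕ := Finset.Icc 2 (r + 1)
    let fam : Finset (Finset ℕ) :=
      insert A₀ ((Finset.Icc 1 n).powerset.filter
        fun B => B.card = r ∧ 1 ∈ B ∧ ¬ Disjoint B A₀)
    (∀ A ∈ fam, ∀ B ∈ fam, (A ∩ B).Nonempty) ∧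
    (¬ ∃ x : ℕ, ∀ A ∈ fam, x ∈ A) ∧
    fam.card = (n - 1).choose (r - 1) - (n - r - 1).choose (r - 1) + 1 := by
  open Finset in
  intro A₀ fam
  have h2A : (2 : ℕ) ∈ A₀ := by simp [A₀]; omega
  have h1A : (1 : ℕ) ∉ A₀ := by simp [A₀]
  have hA₀sub : A₀ ⊆ Finset.Icc 1 n := by
    intro x hx; simp [A₀] at hx ⊢; omega
  have hA₀card : A₀.card = r := by simp [A₀]
  refine ⟨?_, ?_, ?_⟩
  · intro A hA B hB
    simp only [fam, mem_insert, mem_filter, mem_powerset] at hA hB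
    rcases hA with rfl | ⟨hA1, hA2, hA3, hA4⟩
    · rcases hB with rfl | ⟨hB1, hB2, hB3, hB4⟩
      · exact ⟨2, by simp [h2A]⟩
      · rw [Finset.inter_comm]
        exact Finset.not_disjoint_iff_nonempty_inter.mp hB4
    · rcases hB with rfl | ⟨hB1, hB2, hB3, hB4⟩
      · exact Finset.not_disjoint_iff_nonempty_inter.mp hA4
      · exact ⟨1, by simp [hA3, hB3]⟩
  · rintro ⟨x, hx⟩
    have hxA : x ∈ A₀ := hx A₀ (Finset.mem_insert_self _ _)
    have hx2 : 2 ≤ x := by simp [A₀] at hxA; omega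
    set B : Finset ℕ := insert 1 (A₀.erase x) with hB
    have h1nB : 1 ∉ A₀.erase x := fun h => h1A (Finset.mem_of_mem_erase h)
    have hBfam : B ∈ fam := by
      simp only [fam, mem_insert, mem_filter, mem_powerset]
      right
      refine ⟨?_, ?_, Finset.mem_insert_self _ _, ?_⟩
      · apply Finset.insert_subset
        · simp; omega
        · exact (Finset.erase_subset _ _).trans hA₀sub
      · rw [Finset.card_insert_of_notMem h1nB, Finset.card_erase_of_mem hxA, hA₀card]
        omega
      · rw [Finset.not_disjoint_iff]
        have : (A₀.erase x).Nonempty := by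
          rw [← Finset.card_pos, Finset.card_erase_of_mem hxA, hA₀card]; omega
        obtain ⟨y, hy⟩ := this
        exact ⟨y, Finset.mem_insert_of_mem hy, Finset.mem_of_mem_erase hy⟩
    have := hx B hBfam
    simp only [hB, mem_insert, mem_erase] at this
    omega
  · have hA₀notF : A₀ ∉ (Finset.Icc 1 n).powerset.filter
        (fun B => B.card = r ∧ 1 ∈ B ∧ ¬ Disjoint B A₀) := by
      simp only [mem_filter]
      rintro ⟨-, -, h, -⟩; exact h1A h
    rw [show fam = _ from rfl, Finset.card_insert_of_notMem hA₀notF]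
    congr 1
    -- count F
    set G := (Finset.Icc 1 n).powerset.filter (fun B => B.card = r ∧ 1 ∈ B) with hG
    have hsplit : ((Finset.Icc 1 n).powerset.filter
        (fun B => B.card = r ∧ 1 ∈ B ∧ ¬ Disjoint B A₀)).card
        = G.card - ((Finset.Icc 1 n).powerset.filter
        (fun B => B.card = r ∧ 1 ∈ B ∧ Disjoint B A₀)).card := by
      have key : ((Finset.Icc 1 n).powerset.filter
          (fun B => B.card = r ∧ 1 ∈ B ∧ Disjoint B A₀)).card
          + ((Finset.Icc 1 n).powerset.filter
          (fun B => B.card = r ∧ 1 ∈ B ∧ ¬ Disjoint B A₀)).card = G.card := by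
        rw [hG]
        rw [show ((Finset.Icc 1 n).powerset.filter
          (fun B => B.card = r ∧ 1 ∈ B ∧ Disjoint B A₀))
          = G.filter (fun B => Disjoint B A₀) from by
            rw [hG, Finset.filter_filter]; congr 1; ext B; tauto]
        rw [show ((Finset.Icc 1 n).powerset.filter
          (fun B => B.card = r ∧ 1 ∈ B ∧ ¬ Disjoint B A₀))
          = G.filter (fun B => ¬ Disjoint B A₀) from by
            rw [hG, Finset.filter_filter]; congr 1; ext B; tauto]
        exact Finset.card_filter_add_card_filter_not _
      omega
    rw [hsplit]
    have hGcard : G.card = (n - 1).choose (r - 1) := by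
      have h1 : Finset.Icc 1 n = insert 1 (Finset.Icc 2 n) := by
        ext x; simp; omega
      have h1n : (1 : ℕ) ∉ Finset.Icc 2 n := by simp
      have := hm_helper (Finset.Icc 2 n) 1 (r - 1) h1n
      rw [Nat.card_Icc] at this
      rw [hG, h1]
      rw [show r - 1 + 1 = r from by omega] at this
      rw [this]
      congr 1
    have hDcard : ((Finset.Icc 1 n).powerset.filter
        (fun B => B.card = r ∧ 1 ∈ B ∧ Disjoint B A₀)).card
        = (n - r - 1).choose (r - 1) := by
      have heq : (Finset.Icc 1 n).powerset.filter
          (fun B => B.card = r ∧ 1 ∈ B ∧ Disjoint B A₀)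
          = (insert 1 (Finset.Icc (r + 2) n)).powerset.filter
          (fun B => B.card = r ∧ 1 ∈ B) := by
        ext B
        simp only [mem_filter, mem_powerset, Finset.subset_iff, Finset.disjoint_left,
          mem_insert, A₀, Finset.mem_Icc]
        constructor
        · rintro ⟨hsub, hc, h1B, hdisj⟩
          refine ⟨fun x hx => ?_, hc, h1B⟩
          have := hsub hx
          have := hdisj hx
          omega
        · rintro ⟨hsub, hc, h1B⟩
          refine ⟨fun x hx => ?_, hc, h1B, fun {x} hx => ?_⟩
          · have := hsub hx
            rcases this with h | h <;> omega
          · have := hsub hx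
            rcases this with h | h <;> omega
      rw [heq]
      have h1n : (1 : ℕ) ∉ Finset.Icc (r + 2) n := by simp
      have := hm_helper (Finset.Icc (r + 2) n) 1 (r - 1) h1n
      rw [Nat.card_Icc] at this
      rw [show r - 1 + 1 = r from by omega] at this
      rw [this]
      congr 1
      omega
    rw [hGcard, hDcard]
end

section
/- Let 𝒜 and ℬ be nonempty cross-intersecting families of r-element subsets of {1,...,n} with r ≤ n/2. Then |𝒜| + |ℬ| ≤ C(n,r) - C(n-r,r) + 1. -/
/-!
Singleton compressions `j ↦ i` with `i < j` preserve uniformity, cardinalities and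
cross-intersection while strictly decreasing the total sum of elements, so both families may be
assumed shifted. For `n = 2r`, complementation maps `𝒜` injectively to `r`-sets outside `ℬ`.
For `n > 2r`, split both families at the top point `N = n - 1`. By shiftedness the members
avoiding `N` form a nonempty cross-intersecting pair on `N` points, and so do the links at `N`
(the members containing `N`, with `N` removed) unless one of them is empty; in that case the
other link consists of `(r - 1)`-sets meeting a fixed member of the opposite family that avoids
`N`. Induction on `n` and Pascal's rule give the bound.
-/

open Finset UV
open scoped FinsetFamily

namespace UV

section Singleton

variable {α : Type*} [DecidableEq α] {i j : α} {a b : Finset α}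

lemma compress_singleton (i j : α) (a : Finset α) :
    compress {i} {j} a = if i ∉ a ∧ j ∈ a then (insert i a).erase j else a := by
  simp only [compress, disjoint_singleton_left, singleton_subset_iff, sup_eq_union,
    sdiff_singleton_eq_erase, union_singleton]

lemma compress_singleton_inter_nonempty (hab : (a ∩ b).Nonempty)
    (hab' : (a ∩ compress {i} {j} b).Nonempty) : (compress {i} {j} a ∩ b).Nonempty := by
  by_cases hact : i ∉ a ∧ j ∈ a
  swap
  · rwa [compress_singleton, if_neg hact]
  rw [compress_singleton, if_pos hact]
  obtain ⟨x, hx⟩ := hab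
  obtain ⟨hxa, hxb⟩ := mem_inter.1 hx
  obtain rfl | hxj := eq_or_ne x j
  swap
  · exact ⟨x, by simp [hxa, hxb, hxj]⟩
  by_cases hib : i ∈ b
  · exact ⟨i, by simp [hib, ne_of_mem_of_not_mem hxa hact.1 |>.symm]⟩
  rw [compress_singleton, if_pos ⟨hib, hxb⟩] at hab'
  obtain ⟨y, hy⟩ := hab'
  simp only [mem_inter, mem_erase, mem_insert] at hy
  obtain ⟨hya, hyx, rfl | hyb⟩ := hy
  · exact absurd hya hact.1
  · exact ⟨y, by simp [hya, hyx, hyb]⟩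

end Singleton

lemma compress_singleton_mem_powersetCard {i j r n : ℕ} (hij : i < j) {a : Finset ℕ}
    (ha : a ∈ powersetCard r (range n)) : compress {i} {j} a ∈ powersetCard r (range n) := by
  obtain ⟨han, har⟩ := mem_powersetCard.1 ha
  refine mem_powersetCard.2 ⟨?_, (card_compress (by simp) a).trans har⟩
  rw [compress_singleton]
  split_ifs with hact
  · have hjn := mem_range.1 (han hact.2)
    exact (erase_subset _ _).trans (insert_subset (mem_range.2 (hij.trans hjn)) han)
  · exact han

lemma compression_subset_powersetCard {i j r n : ℕ} (hij : i < j) {𝒜 : Finset (Finset ℕ)}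
    (h𝒜 : 𝒜 ⊆ powersetCard r (range n)) : 𝓒 {i} {j} 𝒜 ⊆ powersetCard r (range n) := by
  intro A hA
  rcases mem_compression.1 hA with ⟨hA, -⟩ | ⟨-, a, ha, rfl⟩
  · exact h𝒜 hA
  · exact compress_singleton_mem_powersetCard hij (h𝒜 ha)

lemma sum_compression_lt {α : Type*} [GeneralizedBooleanAlgebra α]
    [DecidableRel (@Disjoint α _ _)] [DecidableLE α] [DecidableEq α] {u v : α} {s : Finset α}
    (w : α → ℕ) (hw : ∀ a, compress u v a ≠ a → w (compress u v a) < w a)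
    (h : 𝓒 u v s ≠ s) : ∑ a ∈ 𝓒 u v s, w a < ∑ a ∈ s, w a := by
  have hmoved : {a ∈ s | compress u v a ∉ s}.Nonempty := by
    contrapose! h
    rw [compression, filter_image, h, image_empty, union_empty]
    exact filter_true_of_mem fun a ha => by simpa using (filter_eq_empty_iff.1 h) ha
  rw [compression, sum_union compress_disjoint, filter_image, sum_image compress_injOn,
    ← sum_filter_add_sum_filter_not s (fun a => compress u v a ∈ s), add_lt_add_iff_left]
  refine sum_lt_sum_of_nonempty hmoved fun a ha => hw a fun hfix => ?_
  rw [mem_filter, hfix] at ha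
  exact ha.2 ha.1

lemma sum_compression_le {α : Type*} [GeneralizedBooleanAlgebra α]
    [DecidableRel (@Disjoint α _ _)] [DecidableLE α] [DecidableEq α] {u v : α} {s : Finset α}
    (w : α → ℕ) (hw : ∀ a, compress u v a ≠ a → w (compress u v a) < w a) :
    ∑ a ∈ 𝓒 u v s, w a ≤ ∑ a ∈ s, w a :=
  (eq_or_ne (𝓒 u v s) s).elim (fun h => by rw [h]) fun h => (sum_compression_lt w hw h).le

lemma sum_compress_singleton_lt {i j : ℕ} (hij : i < j) {A : Finset ℕ}
    (h : compress {i} {j} A ≠ A) : ∑ x ∈ compress {i} {j} A, x < ∑ x ∈ A, x := by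
  rw [compress_singleton] at h ⊢
  split_ifs at h ⊢ with hact
  · have hsum := sum_erase_add (insert i A) id (mem_insert_of_mem hact.2)
    rw [sum_insert hact.1] at hsum
    simp only [id] at hsum
    omega
  · exact absurd rfl h

end UV

namespace Finset

variable {α : Type*} [DecidableEq α]

def CrossIntersecting (𝒜 ℬ : Finset (Finset α)) : Prop :=
  ∀ A ∈ 𝒜, ∀ B ∈ ℬ, (A ∩ B).Nonempty

namespace CrossIntersecting

variable {𝒜 ℬ 𝒜' ℬ' : Finset (Finset α)} {r : ℕ} {s : Finset α}

lemma symm (h : CrossIntersecting 𝒜 ℬ) : CrossIntersecting ℬ 𝒜 :=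
  fun B hB A hA => inter_comm A B ▸ h A hA B hB

lemma mono (h : CrossIntersecting 𝒜 ℬ) (h𝒜 : 𝒜' ⊆ 𝒜) (hℬ : ℬ' ⊆ ℬ) :
    CrossIntersecting 𝒜' ℬ' :=
  fun A hA B hB => h A (h𝒜 hA) B (hℬ hB)

lemma pos_of_subset_powersetCard (h : CrossIntersecting 𝒜 ℬ) (h𝒜 : 𝒜 ⊆ powersetCard r s)
    (h𝒜ne : 𝒜.Nonempty) (hℬne : ℬ.Nonempty) : 0 < r := by
  obtain ⟨A, hA⟩ := h𝒜ne
  obtain ⟨B, hB⟩ := hℬne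
  rw [← (mem_powersetCard.1 (h𝒜 hA)).2]
  exact card_pos.2 ((h A hA B hB).mono inter_subset_left)

lemma map {β : Type*} [DecidableEq β] (f : α ↪ β) (h : CrossIntersecting 𝒜 ℬ) :
    CrossIntersecting (𝒜.map (mapEmbedding f).toEmbedding)
      (ℬ.map (mapEmbedding f).toEmbedding) := by
  simp only [CrossIntersecting, mem_map, RelEmbedding.coe_toEmbedding, mapEmbedding_apply]
  rintro _ ⟨A, hA, rfl⟩ _ ⟨B, hB, rfl⟩
  rw [← map_inter]
  exact (h A hA B hB).map

lemma memberSubfamily_nonMemberSubfamily (h : CrossIntersecting 𝒜 ℬ) (a : α) :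
    CrossIntersecting (𝒜.memberSubfamily a) (ℬ.nonMemberSubfamily a) := by
  intro A hA B hB
  rw [mem_memberSubfamily] at hA
  rw [mem_nonMemberSubfamily] at hB
  obtain ⟨x, hx⟩ := h _ hA.1 B hB.1
  rw [mem_inter, mem_insert] at hx
  obtain ⟨rfl | hxA, hxB⟩ := hx
  · exact absurd hxB hB.2
  · exact ⟨x, mem_inter.2 ⟨hxA, hxB⟩⟩

lemma card_add_card_le_choose (hs : #s = 2 * r) (h𝒜 : 𝒜 ⊆ powersetCard r s)
    (hℬ : ℬ ⊆ powersetCard r s) (h : CrossIntersecting 𝒜 ℬ) :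
    #𝒜 + #ℬ ≤ (2 * r).choose r := by
  have hinj : Set.InjOn (s \ ·) 𝒜 := fun A hA A' hA' hAA' => by
    rw [← sdiff_sdiff_eq_self (mem_powersetCard.1 (h𝒜 hA)).1,
      ← sdiff_sdiff_eq_self (mem_powersetCard.1 (h𝒜 hA')).1]
    exact congrArg (s \ ·) hAA'
  have hdisj : Disjoint (𝒜.image (s \ ·)) ℬ := by
    rw [disjoint_left]
    rintro _ hX hB
    obtain ⟨A, hA, rfl⟩ := mem_image.1 hX
    obtain ⟨x, hx⟩ := h A hA _ hB
    simp only [mem_inter, mem_sdiff] at hx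
    exact hx.2.2 hx.1
  have hsub : 𝒜.image (s \ ·) ⊆ powersetCard r s := by
    intro X hX
    obtain ⟨A, hA, rfl⟩ := mem_image.1 hX
    obtain ⟨hAs, hAr⟩ := mem_powersetCard.1 (h𝒜 hA)
    rw [mem_powersetCard, card_sdiff_of_subset hAs, hs, hAr]
    exact ⟨sdiff_subset, by omega⟩
  rw [← card_image_of_injOn hinj, ← card_union_of_disjoint hdisj, ← hs, ← card_powersetCard]
  exact card_le_card (union_subset hsub hℬ)

lemma compression {i j : α} (h : CrossIntersecting 𝒜 ℬ) :
    CrossIntersecting (𝓒 {i} {j} 𝒜) (𝓒 {i} {j} ℬ) := by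
  intro A hA B hB
  rcases mem_compression.1 hA with ⟨hA, hA'⟩ | ⟨hAn, a, ha, rfl⟩ <;>
    rcases mem_compression.1 hB with ⟨hB, hB'⟩ | ⟨hBn, b, hb, rfl⟩
  · exact h A hA B hB
  · rw [inter_comm]
    exact compress_singleton_inter_nonempty (h.symm b hb A hA) (h.symm b hb _ hA')
  · exact compress_singleton_inter_nonempty (h a ha B hB) (h a ha _ hB')
  · have hia := singleton_subset_iff.1 (le_of_mem_compression_of_notMem hA hAn)
    have hib := singleton_subset_iff.1 (le_of_mem_compression_of_notMem hB hBn)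
    exact ⟨i, mem_inter.2 ⟨hia, hib⟩⟩

end CrossIntersecting

lemma card_add_choose_card_sdiff_le {r : ℕ} {s t : Finset α} {𝒜 : Finset (Finset α)}
    (h𝒜 : 𝒜 ⊆ powersetCard r s) (ht : ∀ A ∈ 𝒜, (A ∩ t).Nonempty) :
    #𝒜 + (#(s \ t)).choose r ≤ (#s).choose r := by
  have hdisj : Disjoint 𝒜 (powersetCard r (s \ t)) := by
    rw [disjoint_left]
    intro A hA hA'
    obtain ⟨x, hx⟩ := ht A hA
    exact (mem_sdiff.1 ((mem_powersetCard.1 hA').1 (mem_inter.1 hx).1)).2 (mem_inter.1 hx).2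
  rw [← card_powersetCard, ← card_powersetCard, ← card_union_of_disjoint hdisj]
  exact card_le_card (union_subset h𝒜 (powersetCard_mono sdiff_subset))

def IsShifted {α : Type*} [LinearOrder α] (𝒜 : Finset (Finset α)) : Prop :=
  ∀ ⦃i j : α⦄, i < j → IsCompressed {i} {j} 𝒜

lemma IsShifted.insert_erase_mem {α : Type*} [LinearOrder α] {𝒜 : Finset (Finset α)}
    {A : Finset α} {i j : α} (h : IsShifted 𝒜) (hA : A ∈ 𝒜) (hij : i < j) (hi : i ∉ A)
    (hj : j ∈ A) : (insert i A).erase j ∈ 𝒜 := by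
  have := compress_mem_compression (u := {i}) (v := {j}) hA
  rwa [(h hij).eq, compress_singleton, if_pos ⟨hi, hj⟩] at this

theorem exists_isShifted (P : Finset (Finset ℕ) → Finset (Finset ℕ) → Prop)
    (hP : ∀ ⦃i j 𝒜 ℬ⦄, i < j → P 𝒜 ℬ → P (𝓒 {i} {j} 𝒜) (𝓒 {i} {j} ℬ))
    {𝒜 ℬ : Finset (Finset ℕ)} (h : P 𝒜 ℬ) :
    ∃ 𝒜' ℬ', P 𝒜' ℬ' ∧ #𝒜' = #𝒜 ∧ #ℬ' = #ℬ ∧ IsShifted 𝒜' ∧ IsShifted ℬ' := by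
  let weight : Finset (Finset ℕ) → ℕ := fun 𝒳 => ∑ X ∈ 𝒳, ∑ x ∈ X, x
  induction hw : weight 𝒜 + weight ℬ using Nat.strong_induction_on generalizing 𝒜 ℬ with
  | _ w ih =>
  by_cases hsh : ∃ i j, i < j ∧ (𝓒 {i} {j} 𝒜 ≠ 𝒜 ∨ 𝓒 {i} {j} ℬ ≠ ℬ)
  · obtain ⟨i, j, hij, hne⟩ := hsh
    have hle (𝒳 : Finset (Finset ℕ)) : weight (𝓒 {i} {j} 𝒳) ≤ weight 𝒳 :=
      sum_compression_le (fun X => ∑ x ∈ X, x) fun _ => sum_compress_singleton_lt hij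
    have hlt {𝒳 : Finset (Finset ℕ)} (h𝒳 : 𝓒 {i} {j} 𝒳 ≠ 𝒳) :
        weight (𝓒 {i} {j} 𝒳) < weight 𝒳 :=
      sum_compression_lt (fun X => ∑ x ∈ X, x) (fun _ => sum_compress_singleton_lt hij) h𝒳
    have hdec : weight (𝓒 {i} {j} 𝒜) + weight (𝓒 {i} {j} ℬ) < w := by
      rw [← hw]
      rcases hne with hne | hne
      · exact add_lt_add_of_lt_of_le (hlt hne) (hle ℬ)
      · exact add_lt_add_of_le_of_lt (hle 𝒜) (hlt hne)
    obtain ⟨𝒜', ℬ', hP', h𝒜', hℬ', hs⟩ := ih _ hdec (hP hij h) rfl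
    exact ⟨𝒜', ℬ', hP', h𝒜'.trans (card_compression _ _ _), hℬ'.trans (card_compression _ _ _), hs⟩
  · push Not at hsh
    exact ⟨𝒜, ℬ, h, rfl, rfl, fun i j hij => (hsh i j hij).1, fun i j hij => (hsh i j hij).2⟩

section Subfamily

variable {α : Type*} [DecidableEq α] {𝒜 : Finset (Finset α)} {r : ℕ} {a : α} {s : Finset α}

lemma nonMemberSubfamily_subset_powersetCard (h : 𝒜 ⊆ powersetCard r (insert a s)) :
    𝒜.nonMemberSubfamily a ⊆ powersetCard r s := by
  intro A hA
  obtain ⟨hA, haA⟩ := mem_nonMemberSubfamily.1 hA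
  obtain ⟨hAs, hAr⟩ := mem_powersetCard.1 (h hA)
  exact mem_powersetCard.2 ⟨(subset_insert_iff_of_notMem haA).1 hAs, hAr⟩

lemma memberSubfamily_subset_powersetCard (h : 𝒜 ⊆ powersetCard (r + 1) (insert a s)) :
    𝒜.memberSubfamily a ⊆ powersetCard r s := by
  intro A hA
  obtain ⟨hA, haA⟩ := mem_memberSubfamily.1 hA
  obtain ⟨hAs, hAr⟩ := mem_powersetCard.1 (h hA)
  rw [card_insert_of_notMem haA, Nat.add_right_cancel_iff] at hAr
  refine mem_powersetCard.2 ⟨?_, hAr⟩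
  exact (subset_insert_iff_of_notMem haA).1 ((subset_insert a A).trans hAs)

end Subfamily

variable {𝒜 ℬ : Finset (Finset ℕ)} {N r : ℕ}

lemma IsShifted.nonMemberSubfamily_nonempty (h : IsShifted 𝒜)
    (h𝒜 : 𝒜 ⊆ powersetCard r (range (N + 1))) (hr : r ≤ N) (hne : 𝒜.Nonempty) :
    (𝒜.nonMemberSubfamily N).Nonempty := by
  obtain ⟨A, hA⟩ := hne
  by_cases hNA : N ∈ A
  swap
  · exact ⟨A, mem_nonMemberSubfamily.2 ⟨hA, hNA⟩⟩
  obtain ⟨i, hi, hiA⟩ := not_subset.1 fun hsub : range N ⊆ A => by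
    have := card_le_card (insert_subset hNA hsub)
    rw [card_insert_of_notMem notMem_range_self, card_range,
      (mem_powersetCard.1 (h𝒜 hA)).2] at this
    omega
  exact ⟨_, mem_nonMemberSubfamily.2
    ⟨h.insert_erase_mem hA (mem_range.1 hi) hiA hNA, notMem_erase N _⟩⟩

lemma CrossIntersecting.memberSubfamily_of_isShifted (h : CrossIntersecting 𝒜 ℬ)
    (h𝒜s : IsShifted 𝒜) (h𝒜 : 𝒜 ⊆ powersetCard (r + 1) (range (N + 1)))
    (hℬ : ℬ ⊆ powersetCard (r + 1) (range (N + 1))) (hN : 2 * r < N) :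
    CrossIntersecting (𝒜.memberSubfamily N) (ℬ.memberSubfamily N) := by
  rw [range_add_one] at h𝒜 hℬ
  intro A hA B hB
  have hAr := (mem_powersetCard.1 (memberSubfamily_subset_powersetCard h𝒜 hA)).2
  have hBr := (mem_powersetCard.1 (memberSubfamily_subset_powersetCard hℬ hB)).2
  obtain ⟨hA, hNA⟩ := mem_memberSubfamily.1 hA
  obtain ⟨hB, -⟩ := mem_memberSubfamily.1 hB
  by_contra hAB
  obtain ⟨j, hj, hjAB⟩ := not_subset.1 fun hsub : range N ⊆ A ∪ B => by
    have := (card_le_card hsub).trans (card_union_le A B)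
    rw [card_range] at this
    omega
  have hjN : j < N := mem_range.1 hj
  -- shifting `N` down to `j` puts `insert j A` into `𝒜`, yet it misses `insert N B`
  have hjA : insert j A ∈ 𝒜 := by
    have hjA : j ∉ insert N A :=
      mem_insert.not.2 (not_or.2 ⟨hjN.ne, fun h => hjAB (mem_union_left B h)⟩)
    have := h𝒜s.insert_erase_mem hA hjN hjA (mem_insert_self N A)
    rwa [insert_comm, erase_insert (by simp [hjN.ne', hNA])] at this
  obtain ⟨x, hx⟩ := h _ hjA _ hB
  simp only [mem_inter, mem_insert] at hx
  rcases hx with ⟨rfl | hxA, rfl | hxB⟩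
  · exact hjN.ne rfl
  · exact hjAB (mem_union_right A hxB)
  · exact hNA hxA
  · exact hAB ⟨x, mem_inter.2 ⟨hxA, hxB⟩⟩

end Finset

def HiltonMilnerBound (n r : ℕ) : Prop :=
  ∀ 𝒜 ℬ : Finset (Finset ℕ), 𝒜 ⊆ powersetCard r (range n) → ℬ ⊆ powersetCard r (range n) →
    𝒜.Nonempty → ℬ.Nonempty → CrossIntersecting 𝒜 ℬ →
    #𝒜 + #ℬ + (n - r).choose r ≤ n.choose r + 1

lemma hiltonMilnerBound_two_mul (r : ℕ) : HiltonMilnerBound (2 * r) r := by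
  intro 𝒜 ℬ h𝒜 hℬ _ _ h
  have := h.card_add_card_le_choose (card_range _) h𝒜 hℬ
  rw [show 2 * r - r = r by omega, Nat.choose_self]
  omega

lemma card_memberSubfamily_add_card_memberSubfamily_le {N R : ℕ} (hN : 2 * R < N)
    (h₀ : HiltonMilnerBound N R) {𝒜 ℬ : Finset (Finset ℕ)}
    (h𝒜 : 𝒜 ⊆ powersetCard (R + 1) (range (N + 1)))
    (hℬ : ℬ ⊆ powersetCard (R + 1) (range (N + 1))) (h𝒜ne : 𝒜.Nonempty) (hℬne : ℬ.Nonempty)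
    (h : CrossIntersecting 𝒜 ℬ) (h𝒜s : IsShifted 𝒜) (hℬs : IsShifted ℬ) :
    #(𝒜.memberSubfamily N) + #(ℬ.memberSubfamily N) + (N - (R + 1)).choose R ≤ N.choose R := by
  have h𝒜₀ := nonMemberSubfamily_subset_powersetCard (a := N) (range_add_one ▸ h𝒜)
  have hℬ₀ := nonMemberSubfamily_subset_powersetCard (a := N) (range_add_one ▸ hℬ)
  have h𝒜₁ := memberSubfamily_subset_powersetCard (a := N) (range_add_one ▸ h𝒜)
  have hℬ₁ := memberSubfamily_subset_powersetCard (a := N) (range_add_one ▸ hℬ)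
  have hpinned {𝒳 : Finset (Finset ℕ)} {T : Finset ℕ} (h𝒳 : 𝒳 ⊆ powersetCard R (range N))
      (hT : T ∈ powersetCard (R + 1) (range N)) (h𝒳T : ∀ X ∈ 𝒳, (X ∩ T).Nonempty) :
      #𝒳 + (N - (R + 1)).choose R ≤ N.choose R := by
    obtain ⟨hTs, hTr⟩ := mem_powersetCard.1 hT
    simpa [card_sdiff_of_subset hTs, hTr] using card_add_choose_card_sdiff_le h𝒳 h𝒳T
  obtain h𝒜₁e | h𝒜₁ne := (𝒜.memberSubfamily N).eq_empty_or_nonempty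
  · obtain ⟨A, hA⟩ := h𝒜s.nonMemberSubfamily_nonempty h𝒜 (by omega) h𝒜ne
    rw [h𝒜₁e, card_empty, zero_add]
    exact hpinned hℬ₁ (h𝒜₀ hA) fun B hB => h.symm.memberSubfamily_nonMemberSubfamily N B hB A hA
  obtain hℬ₁e | hℬ₁ne := (ℬ.memberSubfamily N).eq_empty_or_nonempty
  · obtain ⟨B, hB⟩ := hℬs.nonMemberSubfamily_nonempty hℬ (by omega) hℬne
    rw [hℬ₁e, card_empty, add_zero]
    exact hpinned h𝒜₁ (hℬ₀ hB) fun A hA => h.memberSubfamily_nonMemberSubfamily N A hA B hB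
  have h₁₁ := h.memberSubfamily_of_isShifted h𝒜s h𝒜 hℬ hN
  have hR := h₁₁.pos_of_subset_powersetCard h𝒜₁ h𝒜₁ne hℬ₁ne
  have hgrow : (N - (R + 1)).choose R < (N - R).choose R := by
    obtain ⟨R', rfl⟩ := Nat.exists_eq_add_one_of_ne_zero hR.ne'
    rw [show N - (R' + 1) = N - (R' + 1 + 1) + 1 by omega, Nat.choose_succ_succ']
    have := Nat.choose_pos (n := N - (R' + 1 + 1)) (k := R') (by omega)
    omega
  have := h₀ _ _ h𝒜₁ hℬ₁ h𝒜₁ne hℬ₁ne h₁₁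
  omega

lemma card_add_card_add_choose_le_of_isShifted {N R : ℕ} (hN : 2 * (R + 1) ≤ N)
    (h₁ : HiltonMilnerBound N (R + 1)) (h₀ : HiltonMilnerBound N R)
    {𝒜 ℬ : Finset (Finset ℕ)} (h𝒜 : 𝒜 ⊆ powersetCard (R + 1) (range (N + 1)))
    (hℬ : ℬ ⊆ powersetCard (R + 1) (range (N + 1))) (h𝒜ne : 𝒜.Nonempty) (hℬne : ℬ.Nonempty)
    (h : CrossIntersecting 𝒜 ℬ) (h𝒜s : IsShifted 𝒜) (hℬs : IsShifted ℬ) :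
    #𝒜 + #ℬ + (N + 1 - (R + 1)).choose (R + 1) ≤ (N + 1).choose (R + 1) + 1 := by
  have hbound₀ := h₁ _ _ (nonMemberSubfamily_subset_powersetCard (range_add_one ▸ h𝒜))
    (nonMemberSubfamily_subset_powersetCard (range_add_one ▸ hℬ))
    (h𝒜s.nonMemberSubfamily_nonempty h𝒜 (by omega) h𝒜ne)
    (hℬs.nonMemberSubfamily_nonempty hℬ (by omega) hℬne)
    (h.mono (filter_subset _ _) (filter_subset _ _))
  have hbound₁ := card_memberSubfamily_add_card_memberSubfamily_le (by omega) h₀ h𝒜 hℬ h𝒜ne hℬne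
    h h𝒜s hℬs
  rw [← card_memberSubfamily_add_card_nonMemberSubfamily N 𝒜,
    ← card_memberSubfamily_add_card_nonMemberSubfamily N ℬ, Nat.choose_succ_succ',
    show N + 1 - (R + 1) = N - (R + 1) + 1 by omega, Nat.choose_succ_succ']
  omega

lemma HiltonMilnerBound.succ {N R : ℕ} (hN : 2 * (R + 1) ≤ N) (h₁ : HiltonMilnerBound N (R + 1))
    (h₀ : HiltonMilnerBound N R) : HiltonMilnerBound (N + 1) (R + 1) := by
  intro 𝒜 ℬ h𝒜 hℬ h𝒜ne hℬne h
  obtain ⟨𝒜', ℬ', ⟨h𝒜', hℬ', h'⟩, hcard𝒜, hcardℬ, h𝒜s, hℬs⟩ := exists_isShifted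
    (fun 𝒜 ℬ => 𝒜 ⊆ powersetCard (R + 1) (range (N + 1)) ∧
      ℬ ⊆ powersetCard (R + 1) (range (N + 1)) ∧ CrossIntersecting 𝒜 ℬ)
    (fun _ _ _ _ hij ⟨h𝒜, hℬ, h⟩ => ⟨compression_subset_powersetCard hij h𝒜,
      compression_subset_powersetCard hij hℬ, h.compression⟩)
    ⟨h𝒜, hℬ, h⟩
  rw [← hcard𝒜, ← hcardℬ]
  exact card_add_card_add_choose_le_of_isShifted hN h₁ h₀ h𝒜' hℬ'
    (card_pos.1 (hcard𝒜 ▸ card_pos.2 h𝒜ne)) (card_pos.1 (hcardℬ ▸ card_pos.2 hℬne)) h' h𝒜s hℬs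

theorem hiltonMilnerBound_of_two_mul_le : ∀ {n r : ℕ}, 2 * r ≤ n → HiltonMilnerBound n r
  | _, 0, _ => fun _ _ h𝒜 _ h𝒜ne hℬne h =>
    absurd (h.pos_of_subset_powersetCard h𝒜 h𝒜ne hℬne) (lt_irrefl 0)
  | 0, _ + 1, hr => by omega
  | N + 1, R + 1, hr => by
    obtain hr | hr := hr.eq_or_lt
    · exact hr ▸ hiltonMilnerBound_two_mul (R + 1)
    · exact .succ (by omega) (hiltonMilnerBound_of_two_mul_le (by omega))
        (hiltonMilnerBound_of_two_mul_le (by omega))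

lemma map_valEmbedding_subset_powersetCard {n r : ℕ} {𝒜 : Finset (Finset (Fin n))}
    (h : ∀ A ∈ 𝒜, #A = r) :
    𝒜.map (mapEmbedding Fin.valEmbedding).toEmbedding ⊆ powersetCard r (range n) := by
  intro X hX
  obtain ⟨A, hA, rfl⟩ := mem_map.1 hX
  rw [RelEmbedding.coe_toEmbedding, mapEmbedding_apply, mem_powersetCard, card_map, h A hA]
  refine ⟨fun x hx => ?_, rfl⟩
  obtain ⟨y, -, rfl⟩ := mem_map.1 hx
  exact mem_range.2 y.isLt

/-- **Hilton–Milner cross-intersecting theorem (uniform case).** If `𝒜, ℬ`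
are nonempty cross-intersecting families of `r`-element subsets of an
`n`-element set with `r ≤ n/2`, then `|𝒜| + |ℬ| ≤ C(n,r) - C(n-r,r) + 1`. -/
theorem hilton_milner_cross (n r : ℕ) (hr : 2 * r ≤ n)
    (𝒜 ℬ : Finset (Finset (Fin n)))
    (h𝒜ne : 𝒜.Nonempty) (hℬne : ℬ.Nonempty)
    (h𝒜card : ∀ A ∈ 𝒜, A.card = r) (hℬcard : ∀ B ∈ ℬ, B.card = r)
    (hcross : ∀ A ∈ 𝒜, ∀ B ∈ ℬ, (A ∩ B).Nonempty) :
    𝒜.card + ℬ.card ≤ n.choose r - (n - r).choose r + 1 := by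
  have := hiltonMilnerBound_of_two_mul_le hr _ _ (map_valEmbedding_subset_powersetCard h𝒜card)
    (map_valEmbedding_subset_powersetCard hℬcard) (h𝒜ne.map) (hℬne.map)
    (CrossIntersecting.map Fin.valEmbedding hcross)
  rw [card_map, card_map] at this
  omega
end

section
/- If 𝒜 is an intersecting family of finite sets and i < j, then the combinatorially shifted family S_{i←j}(𝒜) is also intersecting. -/
/-- The combinatorial shift `S_{v←w}` of a family of finite sets: a set `A` in the
family stays if `w ∉ A`, or `v ∈ A`, or `(A \ {w}) ∪ {v}` is already in the family;
otherwise it is replaced by `(A \ {w}) ∪ {v}`. -/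
def combShift {α : Type} [DecidableEq α] (𝒜 : Finset (Finset α)) (v w : α) :
    Finset (Finset α) :=
  (𝒜.filter fun A => w ∉ A ∨ v ∈ A ∨ insert v (A.erase w) ∈ 𝒜) ∪
    ((𝒜.filter fun A => w ∈ A ∧ v ∉ A ∧ insert v (A.erase w) ∉ 𝒜).image
      fun A => insert v (A.erase w))

lemma combShift_aux (𝒜 : Finset (Finset ℕ)) (i j : ℕ)
    (hint : ∀ A ∈ 𝒜, ∀ B ∈ 𝒜, (A ∩ B).Nonempty)
    (A : Finset ℕ) (hA : A ∈ 𝒜)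
    (hcond : j ∉ A ∨ i ∈ A ∨ insert i (A.erase j) ∈ 𝒜)
    (B0 : Finset ℕ) (hB0 : B0 ∈ 𝒜) (hiB : i ∉ B0) :
    (A ∩ insert i (B0.erase j)).Nonempty := by
  rcases hcond with hjA | hiA | hSA
  · obtain ⟨x, hx⟩ := hint A hA B0 hB0
    rw [Finset.mem_inter] at hx
    refine ⟨x, Finset.mem_inter.2 ⟨hx.1, Finset.mem_insert_of_mem ?_⟩⟩
    exact Finset.mem_erase.2 ⟨fun h => hjA (h ▸ hx.1), hx.2⟩
  · exact ⟨i, Finset.mem_inter.2 ⟨hiA, Finset.mem_insert_self _ _⟩⟩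
  · obtain ⟨y, hy⟩ := hint _ hSA B0 hB0
    rw [Finset.mem_inter] at hy
    have hyi : y ≠ i := fun h => hiB (h ▸ hy.2)
    have hyA : y ∈ A.erase j := (Finset.mem_insert.1 hy.1).resolve_left hyi
    rw [Finset.mem_erase] at hyA
    refine ⟨y, Finset.mem_inter.2 ⟨hyA.2, Finset.mem_insert_of_mem ?_⟩⟩
    exact Finset.mem_erase.2 ⟨hyA.1, hy.2⟩

/-- Combinatorial shifting preserves the intersecting property: if `𝒜` is an
intersecting family of finite sets and `i < j`, then `S_{i←j}(𝒜)` is intersecting. -/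
theorem combShift_intersecting (𝒜 : Finset (Finset ℕ)) (i j : ℕ) (hij : i < j)
    (hint : ∀ A ∈ 𝒜, ∀ B ∈ 𝒜, (A ∩ B).Nonempty) :
    ∀ A ∈ combShift 𝒜 i j, ∀ B ∈ combShift 𝒜 i j, (A ∩ B).Nonempty := by
  intro A hA B hB
  simp only [combShift, Finset.mem_union, Finset.mem_filter, Finset.mem_image] at hA hB
  rcases hA with ⟨hA𝒜, hAc⟩ | ⟨A0, ⟨hA0, hjA0, hiA0, _⟩, rfl⟩
  · rcases hB with ⟨hB𝒜, _⟩ | ⟨B0, ⟨hB0, hjB0, hiB0, _⟩, rfl⟩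
    · exact hint A hA𝒜 B hB𝒜
    · exact combShift_aux 𝒜 i j hint A hA𝒜 hAc B0 hB0 hiB0
  · rcases hB with ⟨hB𝒜, hBc⟩ | ⟨B0, ⟨hB0, hjB0, hiB0, _⟩, rfl⟩
    · rw [Finset.inter_comm]
      exact combShift_aux 𝒜 i j hint B hB𝒜 hBc A0 hA0 hiA0
    · exact ⟨i, Finset.mem_inter.2 ⟨Finset.mem_insert_self _ _, Finset.mem_insert_self _ _⟩⟩
end

section
/- If 𝒜 and ℬ are cross-intersecting families of subsets of {1,...,n} and i < j, then S_{i←j}(𝒜) and S_{i←j}(ℬ) are cross-intersecting. -/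
private lemma shift_aux {𝒜 ℬ : Finset (Finset ℕ)} {i j : ℕ}
    (hcross : ∀ A ∈ 𝒜, ∀ B ∈ ℬ, (A ∩ B).Nonempty)
    {A B : Finset ℕ} (hA : A ∈ 𝒜)
    (hcond : j ∉ A ∨ i ∈ A ∨ insert i (A.erase j) ∈ 𝒜)
    (hB : B ∈ ℬ) (hiB : i ∉ B) :
    (A ∩ insert i (B.erase j)).Nonempty := by
  rcases hcond with h | h | h
  · obtain ⟨x, hx⟩ := hcross A hA B hB
    simp only [Finset.mem_inter] at hx
    refine ⟨x, ?_⟩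
    simp only [Finset.mem_inter, Finset.mem_insert, Finset.mem_erase]
    exact ⟨hx.1, Or.inr ⟨fun e => h (e ▸ hx.1), hx.2⟩⟩
  · exact ⟨i, by simp [Finset.mem_inter, h]⟩
  · obtain ⟨x, hx⟩ := hcross _ h B hB
    simp only [Finset.mem_inter, Finset.mem_insert, Finset.mem_erase] at hx
    rcases hx with ⟨hi | ⟨hxj, hxA⟩, hxB⟩
    · exact absurd (hi ▸ hxB) hiB
    · refine ⟨x, ?_⟩
      simp only [Finset.mem_inter, Finset.mem_insert, Finset.mem_erase]
      exact ⟨hxA, Or.inr ⟨hxj, hxB⟩⟩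

/-- Combinatorial shifting preserves the cross-intersecting property: if `𝒜` and `ℬ`
are cross-intersecting families of subsets of `{1,...,n}` and `i < j`, then
`S_{i←j}(𝒜)` and `S_{i←j}(ℬ)` are cross-intersecting. -/
theorem combShift_cross_intersecting (n : ℕ) (𝒜 ℬ : Finset (Finset ℕ))
    (h𝒜 : ∀ A ∈ 𝒜, A ⊆ Finset.Icc 1 n) (hℬ : ∀ B ∈ ℬ, B ⊆ Finset.Icc 1 n)
    (i j : ℕ) (hij : i < j)
    (hcross : ∀ A ∈ 𝒜, ∀ B ∈ ℬ, (A ∩ B).Nonempty) :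
    ∀ A ∈ combShift 𝒜 i j, ∀ B ∈ combShift ℬ i j, (A ∩ B).Nonempty := by
  have hcross' : ∀ B ∈ ℬ, ∀ A ∈ 𝒜, (B ∩ A).Nonempty := by
    intro B hB A hA
    rw [Finset.inter_comm]; exact hcross A hA B hB
  intro A' hA' B' hB'
  simp only [combShift, Finset.mem_union, Finset.mem_filter, Finset.mem_image] at hA' hB'
  rcases hA' with ⟨hA, hcondA⟩ | ⟨A, ⟨hA, hjA, hiA, hsA⟩, rfl⟩
  · rcases hB' with ⟨hB, hcondB⟩ | ⟨B, ⟨hB, hjB, hiB, hsB⟩, rfl⟩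
    · exact hcross _ hA _ hB
    · exact shift_aux hcross hA hcondA hB hiB
  · rcases hB' with ⟨hB, hcondB⟩ | ⟨B, ⟨hB, hjB, hiB, hsB⟩, rfl⟩
    · rw [Finset.inter_comm]
      exact shift_aux hcross' hB hcondB hA hiA
    · exact ⟨i, by simp⟩
end

section
/- If Δ is a vertex-decomposable simplicial complex, then all facets of Δ have dimension at least the depth of Δ; in fact, the depth of Δ equals the minimum dimension of a facet of Δ (Δ has facet depth). -/
open Finset

/-- A (finite, abstract) simplicial complex: a nonempty collection of finite
sets closed under taking subsets. -/
def IsComplex {α : Type} [DecidableEq α] (Δ : Finset (Finset α)) : Prop :=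
  Δ.Nonempty ∧ ∀ A ∈ Δ, ∀ B ⊆ A, B ∈ Δ

/-- The link of a face `S` in `Δ`. -/
def link {α : Type} [DecidableEq α] (Δ : Finset (Finset α)) (S : Finset α) :
    Finset (Finset α) :=
  Δ.filter fun F => Disjoint F S ∧ F ∪ S ∈ Δ

/-- The deletion of a vertex `v` from `Δ`. -/
def del {α : Type} [DecidableEq α] (Δ : Finset (Finset α)) (v : α) :
    Finset (Finset α) :=
  Δ.filter fun F => v ∉ F

/-- The dimension of a simplicial complex, as an integer (`-1` for `{∅}`). -/
def dimC {α : Type} (Δ : Finset (Finset α)) : ℤ := ((Δ.sup Finset.card : ℕ) : ℤ) - 1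

/-- A facet: a maximal face. -/
def IsFacet {α : Type} (Δ : Finset (Finset α)) (A : Finset α) : Prop :=
  A ∈ Δ ∧ ∀ B ∈ Δ, A ⊆ B → B = A

/-- The simplicial boundary of a basis element: `∂A = ∑_{a ∈ A} (-1)^{pos(a)} (A \ {a})`,
where `pos(a)` is the position of `a` in the increasing ordering of `A`. -/
noncomputable def bdElt {α : Type} [LinearOrder α] (F : Type) [Field F]
    (A : Finset α) : Finset α →₀ F :=
  ∑ a ∈ A, ((-1 : F) ^ (A.filter (· < a)).card) • Finsupp.single (A.erase a) (1 : F)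

/-- The boundary operator on (augmented) simplicial chains, where the chain in
cardinality `k` is spanned by the `k`-element sets (in particular the empty set
spans the augmentation degree). -/
noncomputable def bd {α : Type} [LinearOrder α] (F : Type) [Field F] :
    (Finset α →₀ F) →ₗ[F] (Finset α →₀ F) :=
  Finsupp.lsum F fun A => LinearMap.toSpanSingleton F (Finset α →₀ F) (bdElt F A)

/-- Vanishing of the reduced simplicial homology `H̃_i(Δ; F)`: every reduced
cycle supported on `(i+1)`-element faces of `Δ` is the boundary of a chain
supported on `(i+2)`-element faces of `Δ`. -/
def HomologyVanishes {α : Type} [LinearOrder α] (F : Type) [Field F]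
    (Δ : Finset (Finset α)) (i : ℤ) : Prop :=
  ∀ x : Finset α →₀ F, (∀ A ∈ x.support, A ∈ Δ ∧ (A.card : ℤ) = i + 1) →
    bd F x = 0 →
    ∃ y : Finset α →₀ F, (∀ A ∈ y.support, A ∈ Δ ∧ (A.card : ℤ) = i + 2) ∧
      bd F y = x

/-- `Δ` is Cohen–Macaulay over `F`: for every face `A` and every
`i < dim link(Δ, A)`, the reduced homology `H̃_i(link(Δ,A); F)` vanishes. -/
def IsCM {α : Type} [LinearOrder α] (F : Type) [Field F]
    (Δ : Finset (Finset α)) : Prop :=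
  ∀ A ∈ Δ, ∀ i : ℤ, i < dimC (link Δ A) → HomologyVanishes F (link Δ A) i

/-- The `d`-dimensional skeleton of `Δ`: all faces of dimension at most `d`. -/
def skeleton {α : Type} (Δ : Finset (Finset α)) (d : ℤ) : Finset (Finset α) :=
  Δ.filter fun A => (A.card : ℤ) ≤ d + 1

/-- The depth of `Δ` over `F`: the largest `d` such that the `d`-dimensional
skeleton of `Δ` is Cohen–Macaulay over `F`. -/
noncomputable def depthC {α : Type} [LinearOrder α] (F : Type) [Field F]
    (Δ : Finset (Finset α)) : ℤ :=
  sSup {d : ℤ | d ≤ dimC Δ ∧ IsCM F (skeleton Δ d)}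

/-- Vertex-decomposability: `Δ` is a simplex, or has a shedding vertex `v`
(every face containing `v` admits an exchange) whose deletion and link are
both vertex-decomposable. -/
inductive VertexDecomposable {α : Type} [DecidableEq α] :
    Finset (Finset α) → Prop
  | simplex (A : Finset α) : VertexDecomposable A.powerset
  | shed (Δ : Finset (Finset α)) (v : α)
      (hshed : ∀ A ∈ Δ, v ∈ A → ∃ w, w ≠ v ∧ w ∉ A ∧ insert w (A.erase v) ∈ Δ)
      (hdel : VertexDecomposable (del Δ v))
      (hlink : VertexDecomposable (link Δ {v})) :
      VertexDecomposable Δ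

/-!
A Cohen–Macaulay complex is pure: its links are Cohen–Macaulay, hence pure by induction on the
dimension, so facets through a common vertex have the same size, and `H̃₀ = 0` makes the edge graph
connected. Hence if the `d`-skeleton of `Δ` is Cohen–Macaulay, no facet of `Δ` has dimension below
`d`, and the depth is at most the minimal facet dimension `m`.

Conversely the `m`-skeleton of `Δ` is pure, and it is vertex-decomposable with the same shedding
vertices. A pure vertex-decomposable complex is Cohen–Macaulay by induction along the
decomposition: for a face `A` not containing the shedding vertex `v` with `A ∪ {v}` a face,
`link(Δ, A)` is the union of `link(del(Δ, v), A)` and a cone over `link(Δ, A ∪ {v})`, meeting in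
the latter, and a Mayer–Vietoris argument, carried out on chains with the coning homotopy,
transfers the vanishing of homology; purity of the deletion is where the shedding condition enters.
-/

theorem exists_mem_support_of_mem_support_linearCombination {ι κ R : Type*} [Semiring R]
    {g : ι → κ →₀ R} {x : ι →₀ R} {c : κ} (hc : c ∈ (Finsupp.linearCombination R g x).support) :
    ∃ i ∈ x.support, c ∈ (g i).support := by
  classical
  rw [Finsupp.linearCombination_apply] at hc
  obtain ⟨i, hi, hci⟩ := mem_biUnion.1 (Finsupp.support_sum hc)
  exact ⟨i, hi, Finsupp.support_smul hci⟩

section Chains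

variable {α : Type} [LinearOrder α] (F : Type) [Field F]

noncomputable def bdSign (A : Finset α) (a : α) : F := (-1 : F) ^ (A.filter (· < a)).card

theorem bdElt_eq_sum (A : Finset α) :
    bdElt F A = ∑ a ∈ A, bdSign F A a • Finsupp.single (A.erase a) 1 := rfl

theorem bd_eq_linearCombination : bd (α := α) F = Finsupp.linearCombination F (bdElt F) := rfl

variable {F}

theorem bdSign_mul_self (A : Finset α) (a : α) : bdSign F A a * bdSign F A a = 1 := by
  rw [bdSign, ← mul_pow, neg_one_mul, neg_neg, one_pow]

theorem bdSign_insert {v : α} {A : Finset α} (hv : v ∉ A) (a : α) :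
    bdSign F (insert v A) a = if v < a then -bdSign F A a else bdSign F A a := by
  unfold bdSign
  rw [filter_insert]
  split_ifs with h
  · rw [card_insert_of_notMem fun h' => hv (mem_filter.1 h').1, pow_succ, mul_neg_one]
  · rfl

theorem bdSign_erase {a : α} {A : Finset α} (ha : a ∈ A) (v : α) :
    bdSign F (A.erase a) v = if a < v then -bdSign F A v else bdSign F A v := by
  unfold bdSign
  rw [filter_erase]
  split_ifs with h
  · rw [← card_erase_add_one (mem_filter.2 ⟨ha, h⟩) (s := A.filter (· < v)), pow_succ]
    ring
  · rw [erase_eq_of_notMem (s := A.filter (· < v)) fun h' => h (mem_filter.1 h').2]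

theorem bdSign_insert_self {v : α} {A : Finset α} (hv : v ∉ A) :
    bdSign F (insert v A) v = bdSign F A v := by
  simp [bdSign_insert hv]

theorem bdSign_erase_self {v : α} {A : Finset α} (hv : v ∈ A) :
    bdSign F (A.erase v) v = bdSign F A v := by
  simp [bdSign_erase hv]

/-- The two ways of passing from `A` to `insert v (A.erase a)` carry opposite signs. -/
theorem bdSign_insert_add_bdSign_erase {v a : α} {A : Finset α} (hv : v ∉ A) (ha : a ∈ A) :
    bdSign F A v * bdSign F (insert v A) a + bdSign F A a * bdSign F (A.erase a) v = 0 := by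
  rw [bdSign_insert hv, bdSign_erase ha]
  rcases lt_or_gt_of_ne (ne_of_mem_of_not_mem ha hv) with h | h
  · simp [h, h.not_gt]
    ring
  · simp [h, h.not_gt]
    ring

variable (F)

/-- `B` occurs with the sign `bdSign F B v` in the boundary of `insert v B`; this makes `cone v`
a contracting homotopy. -/
noncomputable def coneElt (v : α) (B : Finset α) : Finset α →₀ F :=
  if v ∈ B then 0 else bdSign F B v • Finsupp.single (insert v B) 1

noncomputable def cone (v : α) : (Finset α →₀ F) →ₗ[F] (Finset α →₀ F) :=
  Finsupp.linearCombination F (coneElt F v)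

noncomputable def unconeElt (v : α) (B : Finset α) : Finset α →₀ F :=
  if v ∈ B then bdSign F B v • Finsupp.single (B.erase v) 1 else 0

noncomputable def uncone (v : α) : (Finset α →₀ F) →ₗ[F] (Finset α →₀ F) :=
  Finsupp.linearCombination F (unconeElt F v)

variable {F}

theorem bd_single (A : Finset α) (r : F) : bd F (Finsupp.single A r) = r • bdElt F A :=
  Finsupp.linearCombination_single F r A

theorem cone_single (v : α) (B : Finset α) (r : F) :
    cone F v (Finsupp.single B r) = r • coneElt F v B :=
  Finsupp.linearCombination_single F r B

theorem uncone_single (v : α) (B : Finset α) (r : F) :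
    uncone F v (Finsupp.single B r) = r • unconeElt F v B :=
  Finsupp.linearCombination_single F r B

theorem bdElt_singleton (a : α) : bdElt F {a} = Finsupp.single ∅ 1 := by
  simp [bdElt, filter_singleton]

theorem bdElt_pair {a b : α} (hab : a < b) :
    bdElt F {a, b} = Finsupp.single {b} 1 - Finsupp.single {a} 1 := by
  rw [bdElt, sum_pair hab.ne, erase_insert (notMem_singleton.2 hab.ne),
    erase_insert_of_ne hab.ne, erase_singleton]
  simp [filter_insert, filter_singleton, hab, hab.not_gt, sub_eq_add_neg, add_comm]

theorem bd_coneElt_add_cone_bdElt (v : α) (B : Finset α) :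
    bd F (coneElt F v B) + cone F v (bdElt F B) = Finsupp.single B 1 := by
  have hcone : cone F v (bdElt F B) = ∑ a ∈ B, bdSign F B a • coneElt F v (B.erase a) := by
    simp only [bdElt_eq_sum, map_sum, map_smul, cone_single, one_smul]
  by_cases hv : v ∈ B
  · rw [coneElt, if_pos hv, map_zero, zero_add, hcone, sum_eq_single_of_mem v hv]
    · rw [coneElt, if_neg (notMem_erase v B), smul_smul, insert_erase hv,
        bdSign_erase_self hv, bdSign_mul_self, one_smul]
    · intro a ha hav
      rw [coneElt, if_pos (mem_erase.2 ⟨Ne.symm hav, hv⟩), smul_zero]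
  · have hbd : bd F (coneElt F v B) = Finsupp.single B 1 + ∑ a ∈ B,
        (bdSign F B v * bdSign F (insert v B) a) • Finsupp.single (insert v (B.erase a)) 1 := by
      rw [coneElt, if_neg hv, map_smul, bd_single, one_smul, bdElt_eq_sum, sum_insert hv,
        erase_insert hv, smul_add, smul_smul, bdSign_insert_self hv, bdSign_mul_self, one_smul,
        smul_sum]
      refine congrArg _ (sum_congr rfl fun a ha => ?_)
      rw [smul_smul, erase_insert_of_ne (ne_of_mem_of_not_mem ha hv).symm]
    rw [hbd, hcone, add_assoc, ← sum_add_distrib, add_eq_left]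
    refine sum_eq_zero fun a ha => ?_
    rw [coneElt, if_neg fun h => hv (mem_of_mem_erase h), smul_smul, ← add_smul,
      bdSign_insert_add_bdSign_erase hv ha, zero_smul]

theorem bd_cone_add_cone_bd (v : α) (x : Finset α →₀ F) :
    bd F (cone F v x) + cone F v (bd F x) = x := by
  induction x using Finsupp.induction_linear with
  | zero => simp
  | add x y hx hy =>
    simp only [map_add]
    rw [add_add_add_comm, hx, hy]
  | single B r =>
    rw [cone_single, bd_single, map_smul, map_smul, ← smul_add, bd_coneElt_add_cone_bdElt,
      Finsupp.smul_single_one]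

theorem uncone_coneElt {v : α} {B : Finset α} (hv : v ∉ B) :
    uncone F v (coneElt F v B) = Finsupp.single B 1 := by
  rw [coneElt, if_neg hv, map_smul, uncone_single, one_smul, unconeElt,
    if_pos (mem_insert_self v B), smul_smul, bdSign_insert_self hv, bdSign_mul_self, one_smul,
    erase_insert hv]

theorem cone_unconeElt {v : α} {B : Finset α} (hv : v ∈ B) :
    cone F v (unconeElt F v B) = Finsupp.single B 1 := by
  rw [unconeElt, if_pos hv, map_smul, cone_single, one_smul, coneElt, if_neg (notMem_erase v B),
    smul_smul, bdSign_erase_self hv, bdSign_mul_self, one_smul, insert_erase hv]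

theorem uncone_cone {v : α} {x : Finset α →₀ F} (hx : ∀ B ∈ x.support, v ∉ B) :
    uncone F v (cone F v x) = x := by
  conv_rhs => rw [← Finsupp.sum_single x]
  rw [cone, Finsupp.linearCombination_apply, map_finsuppSum]
  refine Finsupp.sum_congr fun B hB => ?_
  rw [map_smul, uncone_coneElt (hx B hB), Finsupp.smul_single_one]

theorem cone_uncone {v : α} {x : Finset α →₀ F} (hx : ∀ B ∈ x.support, v ∈ B) :
    cone F v (uncone F v x) = x := by
  conv_rhs => rw [← Finsupp.sum_single x]
  rw [uncone, Finsupp.linearCombination_apply, map_finsuppSum]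
  refine Finsupp.sum_congr fun B hB => ?_
  rw [map_smul, cone_unconeElt (hx B hB), Finsupp.smul_single_one]

theorem uncone_eq_zero {v : α} {x : Finset α →₀ F} (hx : ∀ B ∈ x.support, v ∉ B) :
    uncone F v x = 0 := by
  rw [uncone, Finsupp.linearCombination_apply]
  exact Finset.sum_eq_zero fun B hB => by simp [unconeElt, hx B hB]

end Chains

section Supports

variable {α : Type} [LinearOrder α] {F : Type} [Field F]

theorem mem_support_bd {x : Finset α →₀ F} {C : Finset α} (hC : C ∈ (bd F x).support) :
    ∃ A ∈ x.support, ∃ a ∈ A, C = A.erase a := by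
  classical
  obtain ⟨A, hA, hC⟩ := exists_mem_support_of_mem_support_linearCombination hC
  rw [bdElt_eq_sum] at hC
  obtain ⟨a, ha, hCa⟩ := mem_biUnion.1 (Finsupp.support_finsetSum hC)
  exact ⟨A, hA, a, ha, mem_singleton.1 (Finsupp.support_single_subset (Finsupp.support_smul hCa))⟩

theorem mem_support_cone {v : α} {x : Finset α →₀ F} {C : Finset α}
    (hC : C ∈ (cone F v x).support) : ∃ B ∈ x.support, v ∉ B ∧ C = insert v B := by
  obtain ⟨B, hB, hC⟩ := exists_mem_support_of_mem_support_linearCombination hC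
  by_cases hv : v ∈ B
  · simp [coneElt, hv] at hC
  · rw [coneElt, if_neg hv] at hC
    exact ⟨B, hB, hv, mem_singleton.1 (Finsupp.support_single_subset (Finsupp.support_smul hC))⟩

theorem mem_support_uncone {v : α} {x : Finset α →₀ F} {C : Finset α}
    (hC : C ∈ (uncone F v x).support) : ∃ B ∈ x.support, v ∈ B ∧ C = B.erase v := by
  obtain ⟨B, hB, hC⟩ := exists_mem_support_of_mem_support_linearCombination hC
  by_cases hv : v ∈ B
  · rw [unconeElt, if_pos hv] at hC
    exact ⟨B, hB, hv, mem_singleton.1 (Finsupp.support_single_subset (Finsupp.support_smul hC))⟩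
  · simp [unconeElt, hv] at hC

theorem notMem_of_mem_support_bd {v : α} {x : Finset α →₀ F} (hx : ∀ B ∈ x.support, v ∉ B) :
    ∀ C ∈ (bd F x).support, v ∉ C := by
  intro C hC
  obtain ⟨A, hA, a, -, rfl⟩ := mem_support_bd hC
  exact fun h => hx A hA (mem_of_mem_erase h)

end Supports

section HomologyVanishing

variable {α : Type} (F : Type) [Field F]

def chains (Γ : Finset (Finset α)) (k : ℤ) : Submodule F (Finset α →₀ F) :=
  Finsupp.supported F F {A | A ∈ Γ ∧ (A.card : ℤ) = k}

variable {F} {Γ Γ' : Finset (Finset α)}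

theorem mem_chains {k : ℤ} {x : Finset α →₀ F} :
    x ∈ chains F Γ k ↔ ∀ A ∈ x.support, A ∈ Γ ∧ (A.card : ℤ) = k := by
  rw [chains, Finsupp.mem_supported, Set.subset_def]
  rfl

theorem chains_mono (h : Γ ⊆ Γ') (k : ℤ) : chains F Γ k ≤ chains F Γ' k :=
  Finsupp.supported_mono fun _ hA => ⟨h hA.1, hA.2⟩

variable [LinearOrder α]

theorem homologyVanishes_iff {i : ℤ} : HomologyVanishes F Γ i ↔
    ∀ x ∈ chains F Γ (i + 1), bd F x = 0 → ∃ y ∈ chains F Γ (i + 2), bd F y = x := by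
  simp only [HomologyVanishes, mem_chains]

theorem cone_mem_chains {v : α} (hΓ : ∀ B ∈ Γ, v ∉ B → insert v B ∈ Γ') {k : ℤ}
    {x : Finset α →₀ F} (hx : x ∈ chains F Γ k) : cone F v x ∈ chains F Γ' (k + 1) := by
  rw [mem_chains] at hx ⊢
  intro C hC
  obtain ⟨B, hB, hvB, rfl⟩ := mem_support_cone hC
  obtain ⟨hBΓ, hBk⟩ := hx B hB
  exact ⟨hΓ B hBΓ hvB, by rw [card_insert_of_notMem hvB]; push_cast; rw [hBk]⟩

theorem uncone_mem_chains {v : α} (hΓ : ∀ B ∈ Γ, v ∈ B → B.erase v ∈ Γ') {k : ℤ}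
    {x : Finset α →₀ F} (hx : x ∈ chains F Γ k) : uncone F v x ∈ chains F Γ' (k - 1) := by
  rw [mem_chains] at hx ⊢
  intro C hC
  obtain ⟨B, hB, hvB, rfl⟩ := mem_support_uncone hC
  obtain ⟨hBΓ, hBk⟩ := hx B hB
  refine ⟨hΓ B hBΓ hvB, ?_⟩
  rw [← hBk, ← card_erase_add_one hvB]
  push_cast
  ring

theorem homologyVanishes_of_le {i : ℤ} (hi : i ≤ -2) : HomologyVanishes F Γ i := by
  rw [homologyVanishes_iff]
  intro x hx _
  have hx0 : x = 0 := by
    ext A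
    by_contra hA
    have := (mem_chains.1 hx A (Finsupp.mem_support_iff.2 hA)).2
    omega
  exact ⟨0, zero_mem _, by rw [map_zero, hx0]⟩

theorem homologyVanishes_of_insert_mem {v : α} (hΓ : ∀ B ∈ Γ, v ∉ B → insert v B ∈ Γ) (i : ℤ) :
    HomologyVanishes F Γ i := by
  rw [homologyVanishes_iff]
  intro x hx hbd
  refine ⟨cone F v x, by simpa [add_assoc, one_add_one_eq_two] using cone_mem_chains hΓ hx, ?_⟩
  simpa [hbd] using bd_cone_add_cone_bd v x

end HomologyVanishing

section Complexes

variable {α : Type} [DecidableEq α] {Δ Γ : Finset (Finset α)} {A B S : Finset α} {v : α}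

@[simp]
theorem mem_link : A ∈ link Δ S ↔ A ∈ Δ ∧ Disjoint A S ∧ A ∪ S ∈ Δ := mem_filter

@[simp]
theorem mem_del : A ∈ del Δ v ↔ A ∈ Δ ∧ v ∉ A := mem_filter

theorem mem_link_singleton : B ∈ link Δ {v} ↔ B ∈ Δ ∧ v ∉ B ∧ insert v B ∈ Δ := by
  rw [mem_link, disjoint_singleton_right, union_comm, ← insert_eq]

theorem link_singleton_subset_del : link Δ {v} ⊆ del Δ v := fun _ hB =>
  mem_del.2 ⟨(mem_link_singleton.1 hB).1, (mem_link_singleton.1 hB).2.1⟩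

theorem link_empty : link Δ ∅ = Δ := by
  ext A
  simp

theorem IsComplex.empty_mem (hΔ : IsComplex Δ) : ∅ ∈ Δ :=
  hΔ.1.elim fun A hA => hΔ.2 A hA ∅ (empty_subset A)

theorem IsComplex.link (hΔ : IsComplex Δ) (hS : S ∈ Δ) : IsComplex (link Δ S) := by
  refine ⟨⟨∅, by simpa using ⟨hΔ.empty_mem, hS⟩⟩, fun A hA B hBA => ?_⟩
  rw [mem_link] at hA ⊢
  exact ⟨hΔ.2 A hA.1 B hBA, hA.2.1.mono_left hBA, hΔ.2 _ hA.2.2 _ (union_subset_union_left hBA)⟩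

theorem IsComplex.del (hΔ : IsComplex Δ) (v : α) : IsComplex (del Δ v) := by
  refine ⟨⟨∅, by simpa using hΔ.empty_mem⟩, fun A hA B hBA => ?_⟩
  rw [mem_del] at hA ⊢
  exact ⟨hΔ.2 A hA.1 B hBA, fun h => hA.2 (hBA h)⟩

theorem link_link (hΔ : IsComplex Δ) (hd : Disjoint A S) :
    link (link Δ S) A = link Δ (S ∪ A) := by
  ext G
  simp only [mem_link, disjoint_union_right, disjoint_union_left]
  constructor
  · rintro ⟨⟨hG, hGS, -⟩, hGA, -, -, hGAS⟩
    exact ⟨hG, ⟨hGS, hGA⟩, by rwa [union_comm S, ← union_assoc]⟩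
  · rintro ⟨hG, ⟨hGS, hGA⟩, hGSA⟩
    have hsub : ∀ T ⊆ S ∪ A, G ∪ T ∈ Δ := fun T hT => hΔ.2 _ hGSA _ (union_subset_union_right hT)
    refine ⟨⟨hG, hGS, hsub S subset_union_left⟩, hGA, hsub A subset_union_right, ⟨hGS, hd⟩, ?_⟩
    rwa [union_assoc, union_comm A]

theorem link_eq_link_del (hΔ : IsComplex Δ) (hvA : v ∉ A) (hins : insert v A ∉ Δ) :
    link Δ A = link (del Δ v) A := by
  ext G
  simp only [mem_link, mem_del, mem_union, not_or]
  constructor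
  · rintro ⟨hG, hd, hu⟩
    have hvG : v ∉ G := fun hvG =>
      hins (hΔ.2 _ hu _ (insert_subset (mem_union_left _ hvG) subset_union_right))
    exact ⟨⟨hG, hvG⟩, hd, hu, hvG, hvA⟩
  · rintro ⟨⟨hG, -⟩, hd, hu, -⟩
    exact ⟨hG, hd, hu⟩

theorem del_link (hvA : v ∉ A) : del (link Δ A) v = link (del Δ v) A := by
  ext G
  simp only [mem_link, mem_del, mem_union, not_or]
  tauto

theorem link_powerset (hS : S ⊆ A) : link A.powerset S = (A \ S).powerset := by
  ext G
  simp only [mem_link, mem_powerset, subset_sdiff]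
  exact ⟨fun h => ⟨h.1, h.2.1⟩, fun h => ⟨h.1, h.2, union_subset h.1 hS⟩⟩

theorem exists_isFacet_superset (hA : A ∈ Δ) : ∃ B, IsFacet Δ B ∧ A ⊆ B := by
  classical
  obtain ⟨B, hB, hmax⟩ := exists_max_image {B ∈ Δ | A ⊆ B} card ⟨A, mem_filter.2 ⟨hA, subset_rfl⟩⟩
  rw [mem_filter] at hB
  refine ⟨B, ⟨hB.1, fun C hC hBC => ?_⟩, hB.2⟩
  exact (eq_of_subset_of_card_le hBC (hmax C (mem_filter.2 ⟨hC, hB.2.trans hBC⟩))).symm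

end Complexes

section Purity

variable {α : Type}

def IsPure (Δ : Finset (Finset α)) : Prop :=
  ∀ B, IsFacet Δ B → B.card = Δ.sup card

def EdgeReachable [DecidableEq α] (Δ : Finset (Finset α)) : α → α → Prop :=
  Relation.ReflTransGen fun a b => ({a, b} : Finset α) ∈ Δ

def IsShedding [DecidableEq α] (Δ : Finset (Finset α)) (v : α) : Prop :=
  ∀ A ∈ Δ, v ∈ A → ∃ w, w ≠ v ∧ w ∉ A ∧ insert w (A.erase v) ∈ Δ

theorem isPure_of_sup_card_le_one {Δ : Finset (Finset α)} (h : Δ.sup card ≤ 1) : IsPure Δ := by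
  intro B hB
  obtain rfl | ⟨b, hb⟩ := B.eq_empty_or_nonempty
  · rw [card_empty, eq_comm, ← Nat.le_zero]
    exact Finset.sup_le fun C hC => by simp [hB.2 C hC (empty_subset C)]
  · have := card_pos.2 ⟨b, hb⟩
    have := le_sup (f := card) hB.1
    omega

variable [DecidableEq α] {Δ : Finset (Finset α)} {A C G : Finset α} {v : α}

theorem isFacet_union_of_isFacet_link (hΔ : IsComplex Δ) (hG : IsFacet (link Δ A) G) :
    IsFacet Δ (G ∪ A) := by
  obtain ⟨hGm, hGmax⟩ := hG
  rw [mem_link] at hGm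
  refine ⟨hGm.2.2, fun B hB hsub => ?_⟩
  have hAB : A ⊆ B := subset_union_right.trans hsub
  have hBA : B \ A ∈ link Δ A :=
    mem_link.2 ⟨hΔ.2 B hB _ sdiff_subset, sdiff_disjoint, by rwa [sdiff_union_of_subset hAB]⟩
  rw [← hGmax _ hBA (subset_sdiff.2 ⟨subset_union_left.trans hsub, hGm.2.1⟩),
    sdiff_union_of_subset hAB]

theorem IsFacet.sdiff_link (hΔ : IsComplex Δ) (hC : IsFacet Δ C) (hAC : A ⊆ C) :
    IsFacet (link Δ A) (C \ A) := by
  refine ⟨mem_link.2 ⟨hΔ.2 C hC.1 _ sdiff_subset, sdiff_disjoint, ?_⟩, fun B hB hsub => ?_⟩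
  · rw [sdiff_union_of_subset hAC]
    exact hC.1
  · rw [mem_link] at hB
    have hBA : B ∪ A = C :=
      hC.2 _ hB.2.2 (sdiff_union_of_subset hAC ▸ union_subset_union_left hsub)
    rw [← hBA, union_sdiff_cancel_right hB.2.1]

theorem sup_card_link_add_card (hΔ : IsComplex Δ) (hp : IsPure Δ) (hA : A ∈ Δ) :
    (link Δ A).sup card + A.card = Δ.sup card := by
  obtain ⟨G, hG, hsup⟩ := exists_mem_eq_sup _ (hΔ.link hA).1 card
  obtain ⟨E, hE, -⟩ := exists_isFacet_superset (hΔ.link hA).empty_mem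
  have hGA := card_union_of_disjoint (mem_link.1 hG).2.1
  have hEA := card_union_of_disjoint (mem_link.1 hE.1).2.1
  have hGA_le := le_sup (f := card) (mem_link.1 hG).2.2
  have hEA_eq := hp _ (isFacet_union_of_isFacet_link hΔ hE)
  have hE_le := le_sup (f := card) hE.1
  omega

theorem IsPure.link (hp : IsPure Δ) (hΔ : IsComplex Δ) (hA : A ∈ Δ) : IsPure (link Δ A) := by
  intro G hG
  have hGA := card_union_of_disjoint (mem_link.1 hG.1).2.1
  have := hp _ (isFacet_union_of_isFacet_link hΔ hG)
  have := sup_card_link_add_card hΔ hp hA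
  omega

theorem dimC_link (hΔ : IsComplex Δ) (hp : IsPure Δ) (hA : A ∈ Δ) :
    dimC (link Δ A) = dimC Δ - A.card := by
  have := sup_card_link_add_card hΔ hp hA
  unfold dimC
  omega

theorem sup_card_link_singleton_lt (hv : {v} ∈ Δ) : (link Δ {v}).sup card < Δ.sup card := by
  have hpos : 1 ≤ Δ.sup card := le_sup (f := card) hv
  refine (Finset.sup_lt_iff (by simpa using hpos)).2 fun G hG => ?_
  obtain ⟨-, hvG, hins⟩ := mem_link_singleton.1 hG
  have := le_sup (f := card) hins
  rw [card_insert_of_notMem hvG] at this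
  omega

theorem card_eq_of_isPure_link (hΔ : IsComplex Δ) (hp : IsPure (link Δ {v}))
    (hC : IsFacet Δ C) (hvC : v ∈ C) : C.card = (link Δ {v}).sup card + 1 := by
  have h := hp _ (hC.sdiff_link hΔ (singleton_subset_iff.2 hvC))
  rw [card_sdiff_of_subset (singleton_subset_iff.2 hvC), card_singleton] at h
  have := card_pos.2 ⟨v, hvC⟩
  omega

theorem card_insert_erase {A : Finset α} {w : α} (hwA : w ∉ A) (hvA : v ∈ A) :
    (insert w (A.erase v)).card = A.card := by
  rw [card_insert_of_notMem fun h => hwA (mem_of_mem_erase h), card_erase_add_one hvA]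

theorem IsShedding.exists_mem_del_card_eq (hv : IsShedding Δ v) (hA : A ∈ Δ) :
    ∃ B ∈ del Δ v, B.card = A.card := by
  by_cases hvA : v ∈ A
  · obtain ⟨w, hwv, hwA, hB⟩ := hv A hA hvA
    exact ⟨_, mem_del.2 ⟨hB, by simp [hwv.symm]⟩, card_insert_erase hwA hvA⟩
  · exact ⟨A, mem_del.2 ⟨hA, hvA⟩, rfl⟩

theorem IsShedding.sup_card_del (hv : IsShedding Δ v) : (del Δ v).sup card = Δ.sup card := by
  refine le_antisymm (sup_mono (filter_subset _ _)) (Finset.sup_le fun A hA => ?_)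
  obtain ⟨B, hB, hBA⟩ := hv.exists_mem_del_card_eq hA
  exact hBA ▸ le_sup hB

theorem IsShedding.dimC_del (hv : IsShedding Δ v) : dimC (del Δ v) = dimC Δ := by
  rw [dimC, dimC, hv.sup_card_del]

/-- A facet of the deletion that is not a facet of `Δ` would be `E.erase v` for a facet `E ∋ v`,
but the shedding vertex exchanges `v` for a vertex that enlarges it. -/
theorem IsPure.del (hp : IsPure Δ) (hΔ : IsComplex Δ) (hv : IsShedding Δ v) :
    IsPure (del Δ v) := by
  intro G hG
  obtain ⟨hGΔ, hvG⟩ := mem_del.1 hG.1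
  obtain ⟨E, hE, hGE⟩ := exists_isFacet_superset hGΔ
  rw [hv.sup_card_del, ← hp E hE]
  by_cases hvE : v ∈ E
  · exfalso
    obtain ⟨w, hwv, hwE, hwE'⟩ := hv E hE.1 hvE
    have hEG : E.erase v = G := hG.2 _ (mem_del.2 ⟨hΔ.2 _ hE.1 _ (erase_subset v E),
      notMem_erase v E⟩) (subset_erase.2 ⟨hGE, hvG⟩)
    rw [hEG] at hwE'
    have hwG : insert w G = G :=
      hG.2 _ (mem_del.2 ⟨hwE', by simp [hwv.symm, hvG]⟩) (subset_insert w G)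
    exact hwE (mem_of_mem_erase (hEG ▸ hwG ▸ mem_insert_self w G))
  · rw [hG.2 E (mem_del.2 ⟨hE.1, hvE⟩) hGE]

theorem isPure_of_edgeReachable (hΔ : IsComplex Δ)
    (hloc : ∀ v C D, IsFacet Δ C → IsFacet Δ D → v ∈ C → v ∈ D → C.card = D.card)
    (hconn : ∀ u w, {u} ∈ Δ → {w} ∈ Δ → EdgeReachable Δ u w) : IsPure Δ := by
  intro B hB
  obtain ⟨D, hD, hDsup⟩ := exists_mem_eq_sup Δ hΔ.1 card
  have hDf : IsFacet Δ D :=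
    ⟨hD, fun C hC hDC => (eq_of_subset_of_card_le hDC (hDsup ▸ le_sup hC)).symm⟩
  obtain rfl | ⟨u, hu⟩ := B.eq_empty_or_nonempty
  · rw [hDsup, hB.2 D hD (empty_subset D)]
  obtain ⟨w, hw⟩ : D.Nonempty := card_pos.1 (hDsup ▸ (card_pos.2 ⟨u, hu⟩).trans_le (le_sup hB.1))
  have hprop : ∀ c, EdgeReachable Δ u c → ∀ C, IsFacet Δ C → c ∈ C → C.card = B.card := by
    intro c hc
    induction hc with
    | refl => exact fun C hC huC => hloc u C B hC hB huC hu
    | @tail b c _ hbc ih =>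
      obtain ⟨E, hE, hbcE⟩ := exists_isFacet_superset hbc
      intro C hC hcC
      rw [hloc c C E hC hE hcC (hbcE (by simp)), ih E hE (hbcE (by simp))]
  rw [hDsup, hprop w (hconn u w (hΔ.2 B hB.1 _ (singleton_subset_iff.2 hu))
    (hΔ.2 D hD _ (singleton_subset_iff.2 hw))) D hDf hw]

end Purity

theorem VertexDecomposable.empty_mem {α : Type} [DecidableEq α] {Δ : Finset (Finset α)}
    (hvd : VertexDecomposable Δ) : ∅ ∈ Δ := by
  induction hvd with
  | simplex A => exact empty_mem_powerset A
  | shed Δ v _ _ _ ih _ => exact (mem_del.1 ih).1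

section CohenMacaulay

variable {α : Type} [LinearOrder α] {F : Type} [Field F] {Δ : Finset (Finset α)} {v : α}

theorem isCM_powerset (A : Finset α) : IsCM F A.powerset := by
  intro S hS i hi
  rw [link_powerset (mem_powerset.1 hS)] at hi ⊢
  obtain hAS | ⟨v, hv⟩ := (A \ S).eq_empty_or_nonempty
  · rw [hAS] at hi
    exact homologyVanishes_of_le (by simp [dimC] at hi; omega)
  · exact homologyVanishes_of_insert_mem
      (fun B hB _ => mem_powerset.2 (insert_subset hv (mem_powerset.1 hB))) i

theorem IsCM.link (hcm : IsCM F Δ) (hΔ : IsComplex Δ) (S : Finset α) :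
    IsCM F (link Δ S) := by
  intro A hA i hi
  rw [link_link hΔ (mem_link.1 hA).2.1] at hi ⊢
  exact hcm _ (union_comm A S ▸ (mem_link.1 hA).2.2) i hi

theorem IsCM.homologyVanishes (hcm : IsCM F Δ) (hΔ : IsComplex Δ) {i : ℤ} (hi : i < dimC Δ) :
    HomologyVanishes F Δ i := by
  simpa [link_empty] using hcm ∅ hΔ.empty_mem i (by rwa [link_empty])

theorem bd_eq_zero_of_bd_cone_add_eq_zero {x y : Finset α →₀ F} (hx : ∀ B ∈ x.support, v ∉ B)
    (hy : ∀ B ∈ y.support, v ∉ B) (h : bd F (cone F v x + y) = 0) :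
    bd F x = 0 ∧ bd F y = -x := by
  rw [map_add, eq_sub_of_add_eq (bd_cone_add_cone_bd v x)] at h
  have hx' : bd F x = 0 := by
    simpa [uncone_eq_zero hx, uncone_cone (notMem_of_mem_support_bd hx),
      uncone_eq_zero (notMem_of_mem_support_bd hy)] using congrArg (uncone F v) h
  rw [hx', map_zero, sub_zero] at h
  exact ⟨hx', eq_neg_of_add_eq_zero_right h⟩

/-- Mayer–Vietoris for `Γ = del Γ v ∪ star v`, where `star v` is a cone and
`del Γ v ∩ star v = link Γ {v}`. -/
theorem homologyVanishes_of_del_of_link {Γ : Finset (Finset α)} (hΓ : IsComplex Γ) {i : ℤ}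
    (hlink : HomologyVanishes F (link Γ {v}) (i - 1)) (hdel : HomologyVanishes F (del Γ v) i) :
    HomologyVanishes F Γ i := by
  classical
  rw [homologyVanishes_iff] at hlink hdel ⊢
  intro x hx hbd
  set xv := x.filter (v ∈ ·)
  set x₀ := x.filter (v ∉ ·)
  have hsplit : xv + x₀ = x := Finsupp.filter_add_filter_not x _
  have hxv : ∀ B ∈ xv.support, v ∈ B := fun B hB => by
    simp only [xv, Finsupp.support_filter, mem_filter] at hB
    exact hB.2
  have hx₀ : x₀ ∈ chains F (del Γ v) (i + 1) := mem_chains.2 fun B hB => by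
    simp only [x₀, Finsupp.support_filter, mem_filter] at hB
    exact ⟨mem_del.2 ⟨(mem_chains.1 hx B hB.1).1, hB.2⟩, (mem_chains.1 hx B hB.1).2⟩
  have hxvΓ : xv ∈ chains F Γ (i + 1) := mem_chains.2 fun B hB => by
    simp only [xv, Finsupp.support_filter, mem_filter] at hB
    exact mem_chains.1 hx B hB.1
  have hx₁ : uncone F v xv ∈ chains F (link Γ {v}) (i + 1 - 1) :=
    uncone_mem_chains (fun B hB hvB => mem_link_singleton.2
      ⟨hΓ.2 B hB _ (erase_subset v B), notMem_erase v B, by rwa [insert_erase hvB]⟩) hxvΓ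
  rw [add_sub_cancel_right] at hx₁
  rw [sub_add_cancel, show i - 1 + 2 = i + 1 by ring] at hlink
  have hfree : ∀ {y : Finset α →₀ F} {k : ℤ}, y ∈ chains F (del Γ v) k → ∀ B ∈ y.support, v ∉ B :=
    fun hy B hB => (mem_del.1 (mem_chains.1 hy B hB).1).2
  have hcone : cone F v (uncone F v xv) = xv := cone_uncone hxv
  obtain ⟨hbd₁, hbd₀⟩ := bd_eq_zero_of_bd_cone_add_eq_zero
    (hfree (chains_mono link_singleton_subset_del _ hx₁)) (hfree hx₀) (by rwa [hcone, hsplit])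
  obtain ⟨w, hw, hbdw⟩ := hlink _ hx₁ hbd₁
  obtain ⟨y, hy, hbdy⟩ := hdel (x₀ + w) (add_mem hx₀ (chains_mono link_singleton_subset_del _ hw))
    (by rw [map_add, hbd₀, hbdw, neg_add_cancel])
  refine ⟨y - cone F v w, sub_mem (chains_mono (filter_subset _ _) _ hy) ?_, ?_⟩
  · rw [show i + 2 = i + 1 + 1 by ring]
    exact cone_mem_chains (fun B hB _ => (mem_link_singleton.1 hB).2.2) hw
  · rw [map_sub, hbdy, eq_sub_of_add_eq (bd_cone_add_cone_bd v w), hbdw, hcone, ← hsplit]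
    abel

theorem isCM_of_isShedding (hΔ : IsComplex Δ) (hp : IsPure Δ) (hv : IsShedding Δ v)
    (hv₁ : {v} ∈ Δ) (hdel : IsCM F (del Δ v)) (hlink : IsCM F (link Δ {v})) : IsCM F Δ := by
  intro A hA i hi
  by_cases hvA : v ∈ A
  · have hA' : link Δ A = link (link Δ {v}) (A.erase v) := by
      rw [link_link hΔ (disjoint_singleton_right.2 (notMem_erase v A)), ← insert_eq,
        insert_erase hvA]
    rw [hA'] at hi ⊢
    exact hlink _ (mem_link_singleton.2 ⟨hΔ.2 A hA _ (erase_subset v A), notMem_erase v A,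
      by rwa [insert_erase hvA]⟩) i hi
  by_cases hins : insert v A ∈ Δ
  · have hAv : A ∈ link Δ {v} := mem_link_singleton.2 ⟨hA, hvA, hins⟩
    have hAdel : A ∈ del Δ v := mem_del.2 ⟨hA, hvA⟩
    rw [dimC_link hΔ hp hA] at hi
    refine homologyVanishes_of_del_of_link (v := v) (hΔ.link hA) ?_ ?_
    · rw [link_link hΔ (disjoint_singleton_left.2 hvA), union_comm,
        ← link_link hΔ (disjoint_singleton_right.2 hvA)]
      refine hlink A hAv _ ?_
      rw [dimC_link (hΔ.link hv₁) (hp.link hΔ hv₁) hAv, dimC_link hΔ hp hv₁, card_singleton]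
      omega
    · rw [del_link hvA]
      refine hdel A hAdel i ?_
      rwa [dimC_link (hΔ.del v) (hp.del hΔ hv) hAdel, hv.dimC_del]
  · rw [link_eq_link_del hΔ hvA hins] at hi ⊢
    exact hdel A (mem_del.2 ⟨hA, hvA⟩) i hi

theorem VertexDecomposable.isCM (hvd : VertexDecomposable Δ) (hΔ : IsComplex Δ)
    (hp : IsPure Δ) : IsCM F Δ := by
  induction hvd with
  | simplex A => exact isCM_powerset A
  | shed Δ v hv _ hlinkvd ihdel ihlink =>
    have hv₁ : {v} ∈ Δ := by simpa using (mem_link_singleton.1 hlinkvd.empty_mem).2.2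
    exact isCM_of_isShedding hΔ hp hv hv₁ (ihdel (hΔ.del v) (hp.del hΔ hv))
      (ihlink (hΔ.link hv₁) (hp.link hΔ hv₁))

end CohenMacaulay

section Connectivity

variable {α : Type} [LinearOrder α] {F : Type} [Field F] {Δ : Finset (Finset α)}

/-- The functional counting the vertices reachable from `u` kills the boundary of every edge,
but not the cycle `{u} - {w}` unless `w` is reachable. -/
theorem HomologyVanishes.edgeReachable (h0 : HomologyVanishes F Δ 0) {u w : α}
    (hu : {u} ∈ Δ) (hw : {w} ∈ Δ) : EdgeReachable Δ u w := by
  classical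
  let φ : (Finset α →₀ F) →ₗ[F] F :=
    Finsupp.linearCombination F fun A => if ∃ a ∈ A, EdgeReachable Δ u a then 1 else 0
  have hφ (a : α) : φ (Finsupp.single {a} 1) = if EdgeReachable Δ u a then 1 else 0 := by
    simp [φ]
  have hφbd (A : Finset α) (hA : A ∈ Δ) (hA₂ : A.card = 2) : φ (bdElt F A) = 0 := by
    obtain ⟨a, b, hab, rfl⟩ := card_eq_two.1 hA₂
    have hiff : EdgeReachable Δ u a ↔ EdgeReachable Δ u b :=
      ⟨fun h => h.tail hA, fun h => h.tail (pair_comm a b ▸ hA)⟩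
    rcases lt_or_gt_of_ne hab with h | h
    · simp [bdElt_pair h, hφ, hiff]
    · simp [pair_comm a b, bdElt_pair h, hφ, hiff]
  rw [homologyVanishes_iff] at h0
  have hx : Finsupp.single {u} 1 - Finsupp.single {w} 1 ∈ chains F Δ (0 + 1) :=
    sub_mem (Finsupp.single_mem_supported F 1 ⟨hu, by simp⟩)
      (Finsupp.single_mem_supported F 1 ⟨hw, by simp⟩)
  obtain ⟨y, hy, hbdy⟩ := h0 _ hx (by simp [bd_single, bdElt_singleton])
  have hφy : φ (bd F y) = 0 := by
    rw [bd_eq_linearCombination, Finsupp.linearCombination_apply F (v := bdElt F),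
      map_finsuppSum]
    refine sum_eq_zero fun A hA => ?_
    obtain ⟨hAΔ, hA₂⟩ := mem_chains.1 hy A hA
    simp only [map_smul, hφbd A hAΔ (by omega), smul_zero]
  rw [hbdy, map_sub, hφ, hφ, if_pos .refl] at hφy
  by_contra hr
  simp [hr] at hφy

theorem IsCM.isPure (hcm : IsCM F Δ) (hΔ : IsComplex Δ) : IsPure Δ := by
  induction hn : Δ.sup card using Nat.strong_induction_on generalizing Δ with
  | _ n ih =>
  by_cases h₁ : n ≤ 1
  · exact isPure_of_sup_card_le_one (hn ▸ h₁)
  refine isPure_of_edgeReachable hΔ (fun v C D hC hD hvC hvD => ?_) fun u w hu hw => ?_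
  · have hv : {v} ∈ Δ := hΔ.2 C hC.1 _ (singleton_subset_iff.2 hvC)
    have hpl := ih _ (hn ▸ sup_card_link_singleton_lt hv) (hcm.link hΔ {v}) (hΔ.link hv) rfl
    rw [card_eq_of_isPure_link hΔ hpl hC hvC, card_eq_of_isPure_link hΔ hpl hD hvD]
  · exact (hcm.homologyVanishes hΔ (by unfold dimC; omega)).edgeReachable hu hw

end Connectivity

section Skeleton

variable {α : Type} {Δ : Finset (Finset α)} {d : ℤ}

@[simp]
theorem mem_skeleton {A : Finset α} : A ∈ skeleton Δ d ↔ A ∈ Δ ∧ (A.card : ℤ) ≤ d + 1 :=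
  mem_filter

theorem card_sub_one_le_dimC {A : Finset α} (hA : A ∈ Δ) : (A.card : ℤ) - 1 ≤ dimC Δ := by
  have := le_sup (f := card) hA
  unfold dimC
  omega

theorem skeleton_eq_self (h : ∀ A ∈ Δ, (A.card : ℤ) ≤ d + 1) : skeleton Δ d = Δ :=
  filter_true_of_mem h

theorem skeleton_neg_one (h : ∅ ∈ Δ) : skeleton Δ (-1) = (∅ : Finset α).powerset := by
  ext A
  simp only [mem_skeleton, powerset_empty, mem_singleton, neg_add_cancel, Nat.cast_nonpos,
    card_eq_zero]
  exact ⟨And.right, fun hA => ⟨hA ▸ h, hA⟩⟩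

variable [DecidableEq α] {v : α}

theorem IsComplex.skeleton (hΔ : IsComplex Δ) (hd : -1 ≤ d) : IsComplex (skeleton Δ d) := by
  refine ⟨⟨∅, mem_skeleton.2 ⟨hΔ.empty_mem, by simp; omega⟩⟩, fun A hA B hBA => ?_⟩
  obtain ⟨hAΔ, hAd⟩ := mem_skeleton.1 hA
  have := card_le_card hBA
  exact mem_skeleton.2 ⟨hΔ.2 A hAΔ B hBA, by omega⟩

theorem del_skeleton : del (skeleton Δ d) v = skeleton (del Δ v) d := by
  ext A
  simp only [mem_del, mem_skeleton]
  tauto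

theorem link_skeleton_singleton : link (skeleton Δ d) {v} = skeleton (link Δ {v}) (d - 1) := by
  ext B
  simp only [mem_link_singleton, mem_skeleton]
  constructor
  · rintro ⟨⟨hB, -⟩, hvB, hins, hcard⟩
    rw [card_insert_of_notMem hvB] at hcard
    exact ⟨⟨hB, hvB, hins⟩, by push_cast at hcard; omega⟩
  · rintro ⟨⟨hB, hvB, hins⟩, hcard⟩
    rw [card_insert_of_notMem hvB]
    exact ⟨⟨hB, by omega⟩, hvB, hins, by push_cast; omega⟩

theorem IsShedding.skeleton (hv : IsShedding Δ v) : IsShedding (skeleton Δ d) v := by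
  intro A hA hvA
  obtain ⟨hAΔ, hAd⟩ := mem_skeleton.1 hA
  obtain ⟨w, hwv, hwA, hw⟩ := hv A hAΔ hvA
  exact ⟨w, hwv, hwA, mem_skeleton.2 ⟨hw, by rwa [card_insert_erase hwA hvA]⟩⟩

theorem vertexDecomposable_skeleton_powerset (A : Finset α) (hd : -1 ≤ d) :
    VertexDecomposable (skeleton A.powerset d) := by
  induction A using Finset.induction_on generalizing d with
  | empty =>
    rw [skeleton_eq_self fun B hB => by simp at hB; simp [hB]; omega]
    exact .simplex ∅
  | insert v A hvA ih =>
    by_cases hcard : ((insert v A).card : ℤ) ≤ d + 1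
    · rw [skeleton_eq_self fun B hB =>
        (Nat.cast_le.2 (card_le_card (mem_powerset.1 hB))).trans hcard]
      exact .simplex _
    obtain rfl | hd := hd.eq_or_lt
    · rw [skeleton_neg_one (empty_mem_powerset _)]
      exact .simplex ∅
    refine .shed _ v (fun B hB hvB => ?_) ?_ ?_
    · obtain ⟨hBA, hBd⟩ := mem_skeleton.1 hB
      obtain ⟨w, hw, hwB⟩ := exists_mem_notMem_of_card_lt_card (s := B) (t := insert v A) (by omega)
      have hsub : insert w (B.erase v) ⊆ insert v A :=
        insert_subset hw ((erase_subset v B).trans (mem_powerset.1 hBA))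
      exact ⟨w, fun h => hwB (h ▸ hvB), hwB,
        mem_skeleton.2 ⟨mem_powerset.2 hsub, by rwa [card_insert_erase hwB hvB]⟩⟩
    · have hdel : del (insert v A).powerset v = A.powerset := by
        ext B
        simp only [mem_del, mem_powerset]
        exact ⟨fun h => (subset_insert_iff_of_notMem h.2).1 h.1,
          fun h => ⟨h.trans (subset_insert v A), fun hv => hvA (h hv)⟩⟩
      rw [del_skeleton, hdel]
      exact ih hd.le
    · rw [link_skeleton_singleton, link_powerset (singleton_subset_iff.2 (mem_insert_self v A)),
        sdiff_singleton_eq_erase, erase_insert hvA]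
      exact ih (by omega)

theorem VertexDecomposable.skeleton (hvd : VertexDecomposable Δ) (hd : -1 ≤ d) :
    VertexDecomposable (skeleton Δ d) := by
  induction hvd generalizing d with
  | simplex A => exact vertexDecomposable_skeleton_powerset A hd
  | shed Δ v hv hdelvd _ ihdel ihlink =>
    obtain rfl | hd := hd.eq_or_lt
    · rw [skeleton_neg_one (mem_del.1 hdelvd.empty_mem).1]
      exact .simplex ∅
    refine .shed _ v (IsShedding.skeleton hv) ?_ ?_
    · rw [del_skeleton]
      exact ihdel hd.le
    · rw [link_skeleton_singleton]
      exact ihlink (by omega)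

theorem sup_card_skeleton (hΔ : IsComplex Δ) (hd : -1 ≤ d) (hdΔ : d ≤ dimC Δ) :
    (((skeleton Δ d).sup card : ℕ) : ℤ) = d + 1 := by
  obtain ⟨G, hG, hGsup⟩ := exists_mem_eq_sup _ (hΔ.skeleton hd).1 card
  obtain ⟨D, hD, hDsup⟩ := exists_mem_eq_sup Δ hΔ.1 card
  obtain ⟨D', hD', hD'card⟩ := exists_subset_card_eq (s := D) (n := (d + 1).toNat)
    (by unfold dimC at hdΔ; omega)
  have hD'skel : D' ∈ skeleton Δ d := mem_skeleton.2 ⟨hΔ.2 D hD D' hD', by omega⟩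
  have := le_sup (f := card) hD'skel
  have := (mem_skeleton.1 hG).2
  omega

theorem isPure_skeleton (hΔ : IsComplex Δ) (hd : -1 ≤ d) (hdΔ : d ≤ dimC Δ)
    (hfacet : ∀ A, IsFacet Δ A → d + 1 ≤ A.card) : IsPure (skeleton Δ d) := by
  intro G hG
  rw [← Nat.cast_inj (R := ℤ), sup_card_skeleton hΔ hd hdΔ]
  obtain ⟨hGΔ, hGd⟩ := mem_skeleton.1 hG.1
  obtain ⟨E, hE, hGE⟩ := exists_isFacet_superset hGΔ
  refine le_antisymm hGd (not_lt.1 fun hlt => ?_)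
  obtain ⟨b, hbE, hbG⟩ := exists_mem_notMem_of_card_lt_card (s := G) (t := E)
    (by have := hfacet E hE; omega)
  have hbG' : insert b G = G := hG.2 _ (mem_skeleton.2 ⟨hΔ.2 E hE.1 _ (insert_subset hbE hGE),
    by rw [card_insert_of_notMem hbG]; push_cast; omega⟩) (subset_insert b G)
  exact hbG (hbG' ▸ mem_insert_self b G)

theorem exists_isFacet_forall_card_le (hΔ : Δ.Nonempty) :
    ∃ A, IsFacet Δ A ∧ ∀ B, IsFacet Δ B → A.card ≤ B.card := by
  classical
  obtain ⟨C, hC⟩ := hΔ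
  obtain ⟨E, hE, -⟩ := exists_isFacet_superset hC
  obtain ⟨A, hA, hmin⟩ := exists_min_image (Δ.filter (IsFacet Δ)) card ⟨E, mem_filter.2 ⟨hE.1, hE⟩⟩
  exact ⟨A, (mem_filter.1 hA).2, fun B hB => hmin B (mem_filter.2 ⟨hB.1, hB⟩)⟩

end Skeleton

theorem IsFacet.le_of_isCM_skeleton {α : Type} [LinearOrder α] {F : Type} [Field F]
    {Δ : Finset (Finset α)} {A : Finset α} {d : ℤ} (hA : IsFacet Δ A) (hΔ : IsComplex Δ)
    (hdΔ : d ≤ dimC Δ) (hcm : IsCM F (skeleton Δ d)) : d ≤ A.card - 1 := by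
  by_contra! h
  have hd : -1 ≤ d := by omega
  have hAf : IsFacet (skeleton Δ d) A :=
    ⟨mem_skeleton.2 ⟨hA.1, by omega⟩, fun B hB hAB => hA.2 B (mem_skeleton.1 hB).1 hAB⟩
  have := hcm.isPure (hΔ.skeleton hd) A hAf
  have := sup_card_skeleton hΔ hd hdΔ
  omega

/-- **Vertex-decomposable complexes have facet depth.** If `Δ` is
vertex-decomposable, then every facet of `Δ` has dimension at least the depth
of `Δ`; in fact the depth of `Δ` (over any field) equals the minimum dimension
of a facet of `Δ`. -/
theorem vertexDecomposable_facet_depth {α : Type} [LinearOrder α]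
    (Δ : Finset (Finset α)) (hΔ : IsComplex Δ) (hvd : VertexDecomposable Δ)
    (F : Type) [Field F] :
    (∀ A, IsFacet Δ A → depthC F Δ ≤ (A.card : ℤ) - 1) ∧
    (∃ A, IsFacet Δ A ∧ depthC F Δ = (A.card : ℤ) - 1) := by
  obtain ⟨A₀, hA₀, hmin⟩ := exists_isFacet_forall_card_le hΔ.1
  have hA₀dim := card_sub_one_le_dimC hA₀.1
  have hskel : IsCM F (skeleton Δ (A₀.card - 1)) :=
    (hvd.skeleton (by omega)).isCM (hΔ.skeleton (by omega))
      (isPure_skeleton hΔ (by omega) hA₀dim fun A hA => by have := hmin A hA; omega)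
  have hdepth : depthC F Δ = A₀.card - 1 :=
    IsGreatest.csSup_eq ⟨⟨hA₀dim, hskel⟩, fun d hd => hA₀.le_of_isCM_skeleton hΔ hd.1 hd.2⟩
  exact ⟨fun A hA => by have := hmin A hA; omega, A₀, hA₀, hdepth⟩
end

section
/- Every shifted simplicial complex is vertex-decomposable. -/
open Finset

/-- A simplicial complex on vertex set `{1,...,n}` is shifted if whenever `A`
is a face, `j ∈ A`, and `i < j` with `i ∉ A` (and `i` is a vertex of the ground
set), then `(A \ {j}) ∪ {i}` is also a face. -/
def ShiftedComplex (n : ℕ) (Δ : Finset (Finset ℕ)) : Prop :=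
  ∀ A ∈ Δ, ∀ j ∈ A, ∀ i ∈ Finset.Icc 1 n, i < j → i ∉ A →
    insert i (A.erase j) ∈ Δ

lemma shifted_vd_aux (n : ℕ) : ∀ Δ : Finset (Finset ℕ),
    IsComplex Δ → (∀ A ∈ Δ, A ⊆ Finset.Icc 1 n) → ShiftedComplex n Δ →
    VertexDecomposable Δ := by
  intro Δ
  induction Δ using Finset.strongInduction with
  | _ Δ ih =>
    intro hΔ hground hshift
    by_cases hV : (Δ.sup id) = ∅
    · -- Δ = {∅}
      have hΔeq : Δ = (∅ : Finset ℕ).powerset := by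
        ext A
        simp only [Finset.powerset_empty, Finset.mem_singleton]
        constructor
        · intro hA
          have := Finset.le_sup (f := id) hA
          rw [hV] at this
          exact Finset.subset_empty.mp this
        · rintro rfl
          obtain ⟨B, hB⟩ := hΔ.1
          exact hΔ.2 B hB ∅ (Finset.empty_subset B)
      rw [hΔeq]
      exact VertexDecomposable.simplex ∅
    · have hVne : (Δ.sup id).Nonempty := Finset.nonempty_iff_ne_empty.mpr hV
      set v := (Δ.sup id).max' hVne with hv
      have hmax : ∀ A ∈ Δ, ∀ x ∈ A, x ≤ v := by
        intro A hA x hx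
        exact Finset.le_max' _ x (Finset.mem_sup.mpr ⟨A, hA, hx⟩)
      obtain ⟨A₀, hA₀, hvA₀⟩ := Finset.mem_sup.mp ((Δ.sup id).max'_mem hVne)
      have hv1 : 1 ≤ v := (Finset.mem_Icc.mp (hground A₀ hA₀ hvA₀)).1
      have hvn : v ≤ n := (Finset.mem_Icc.mp (hground A₀ hA₀ hvA₀)).2
      have hsub : ∀ A ∈ Δ, A ⊆ Finset.Icc 1 v := by
        intro A hA x hx
        exact Finset.mem_Icc.mpr ⟨(Finset.mem_Icc.mp (hground A hA hx)).1,
          hmax A hA x hx⟩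
      by_cases htop : Finset.Icc 1 v ∈ Δ
      · have hΔeq : Δ = (Finset.Icc 1 v).powerset := by
          ext A
          rw [Finset.mem_powerset]
          exact ⟨fun hA => hsub A hA, fun hA => hΔ.2 _ htop A hA⟩
        rw [hΔeq]
        exact VertexDecomposable.simplex _
      · -- v is a shedding vertex
        refine VertexDecomposable.shed Δ v ?_ ?_ ?_
        · -- shedding
          intro A hA hvA
          have hAne : A ≠ Finset.Icc 1 v := fun h => htop (h ▸ hA)
          have hAss : A ⊂ Finset.Icc 1 v := (hsub A hA).ssubset_of_ne hAne
          obtain ⟨i, hiIcc, hiA⟩ := Finset.exists_of_ssubset hAss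
          obtain ⟨hi1, hiv⟩ := Finset.mem_Icc.mp hiIcc
          have hiv' : i < v := lt_of_le_of_ne hiv (fun h => hiA (h ▸ hvA))
          refine ⟨i, Nat.ne_of_lt hiv', hiA, ?_⟩
          exact hshift A hA v hvA i (Finset.mem_Icc.mpr ⟨hi1, le_trans hiv hvn⟩)
            hiv' hiA
        · -- deletion is VD
          have hss : del Δ v ⊂ Δ := by
            refine (Finset.filter_subset _ _).ssubset_of_ne ?_
            intro h
            have : A₀ ∈ del Δ v := by unfold del; rw [h]; exact hA₀
            exact (Finset.mem_filter.mp this).2 hvA₀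
          refine ih _ hss ⟨⟨∅, ?_⟩, ?_⟩ ?_ ?_
          · exact Finset.mem_filter.mpr ⟨hΔ.2 A₀ hA₀ ∅ (Finset.empty_subset _),
              Finset.notMem_empty v⟩
          · intro A hA B hB
            obtain ⟨hA1, hA2⟩ := Finset.mem_filter.mp hA
            exact Finset.mem_filter.mpr ⟨hΔ.2 A hA1 B hB, fun h => hA2 (hB h)⟩
          · intro A hA
            exact hground A (Finset.mem_filter.mp hA).1
          · intro A hA j hj i hiIcc hij hiA
            obtain ⟨hA1, hA2⟩ := Finset.mem_filter.mp hA
            refine Finset.mem_filter.mpr ⟨hshift A hA1 j hj i hiIcc hij hiA, ?_⟩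
            have hjv : j < v := lt_of_le_of_ne (hmax A hA1 j hj)
              (fun h => hA2 (h ▸ hj))
            intro h
            rcases Finset.mem_insert.mp h with h | h
            · omega
            · exact hA2 (Finset.mem_of_mem_erase h)
        · -- link is VD
          have hss : link Δ {v} ⊂ Δ := by
            refine (Finset.filter_subset _ _).ssubset_of_ne ?_
            intro h
            have : A₀ ∈ link Δ {v} := by unfold link; rw [h]; exact hA₀
            have hd := (Finset.mem_filter.mp this).2.1
            exact (Finset.disjoint_right.mp hd (Finset.mem_singleton_self v)) hvA₀
          have hvΔ : ({v} : Finset ℕ) ∈ Δ := by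
            apply hΔ.2 A₀ hA₀
            exact Finset.singleton_subset_iff.mpr hvA₀
          refine ih _ hss ⟨⟨∅, ?_⟩, ?_⟩ ?_ ?_
          · refine Finset.mem_filter.mpr ⟨hΔ.2 A₀ hA₀ ∅ (Finset.empty_subset _),
              Finset.disjoint_left.mpr (by simp), ?_⟩
            simpa using hvΔ
          · intro A hA B hB
            obtain ⟨hA1, hA2, hA3⟩ := Finset.mem_filter.mp hA
            refine Finset.mem_filter.mpr ⟨hΔ.2 A hA1 B hB,
              Finset.disjoint_of_subset_left hB hA2, ?_⟩
            exact hΔ.2 _ hA3 _ (Finset.union_subset_union hB (subset_refl _))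
          · intro A hA
            exact hground A (Finset.mem_filter.mp hA).1
          · intro A hA j hj i hiIcc hij hiA
            obtain ⟨hA1, hA2, hA3⟩ := Finset.mem_filter.mp hA
            have hvA : v ∉ A := fun h =>
              Finset.disjoint_left.mp hA2 h (Finset.mem_singleton_self v)
            have hjv : j < v := lt_of_le_of_ne (hmax A hA1 j hj)
              (fun h => hvA (h ▸ hj))
            have hivne : i ≠ v := by omega
            refine Finset.mem_filter.mpr ⟨hshift A hA1 j hj i hiIcc hij hiA, ?_, ?_⟩
            · refine Finset.disjoint_right.mpr ?_
              intro x hx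
              rw [Finset.mem_singleton] at hx
              subst hx
              intro h
              rcases Finset.mem_insert.mp h with h | h
              · exact hivne h.symm
              · exact hvA (Finset.mem_of_mem_erase h)
            · have hB : A ∪ {v} ∈ Δ := hA3
              have hjB : j ∈ A ∪ {v} := Finset.mem_union_left _ hj
              have hiB : i ∉ A ∪ {v} := by
                intro h
                rcases Finset.mem_union.mp h with h | h
                · exact hiA h
                · exact hivne (Finset.mem_singleton.mp h)
              have := hshift _ hB j hjB i hiIcc hij hiB
              have heq : insert i ((A ∪ {v}).erase j)
                  = insert i (A.erase j) ∪ {v} := by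
                ext x
                simp only [Finset.mem_insert, Finset.mem_erase, Finset.mem_union,
                  Finset.mem_singleton]
                constructor
                · rintro (rfl | ⟨hxj, hx | rfl⟩)
                  · exact Or.inl (Or.inl rfl)
                  · exact Or.inl (Or.inr ⟨hxj, hx⟩)
                  · exact Or.inr rfl
                · rintro ((rfl | ⟨hxj, hx⟩) | rfl)
                  · exact Or.inl rfl
                  · exact Or.inr ⟨hxj, Or.inl hx⟩
                  · exact Or.inr ⟨by omega, Or.inr rfl⟩
              rwa [heq] at this

/-- **Shifted complexes are vertex-decomposable.** Every shifted simplicial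
complex that is not a simplex is vertex-decomposable; in particular, every
shifted simplicial complex is vertex-decomposable. -/
theorem shifted_vertexDecomposable (n : ℕ) (Δ : Finset (Finset ℕ))
    (hΔ : IsComplex Δ) (hground : ∀ A ∈ Δ, A ⊆ Finset.Icc 1 n)
    (hshift : ShiftedComplex n Δ) :
    VertexDecomposable Δ :=
  shifted_vd_aux n Δ hΔ hground hshift
end
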